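/- arXiv:2110.09650 — 7 statements merged into one kernel-verified Lean document; each statement's English description precedes it below -/
import Mathlib

section
/- Suppose S is a stochastic operator satisfying the Harris condition on the sublevel set C = {V ≤ R}: there exist α ∈ (0,1) and a probability measure η with Sμ ≥ α η μ(C) for all nonnegative μ ∈ M. Then for any A ∈ (0, R/2), every zero-mean measure ν with ∫V d|ν| ≤ A‖ν‖_TV satisfies ‖Sν‖_TV ≤ (1 − α(1 − 2A/R))‖ν‖_TV. -/
open MeasureTheory

/-- Total variation norm of a finite signed measure. -/
noncomputable def tvNorm {Ω : Type*} [MeasurableSpace Ω] (μ : SignedMeasure Ω) : ℝ :=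
  (μ.totalVariation Set.univ).toReal

/-- `V`-weighted total variation norm `∫ V d|μ|`. -/
noncomputable def wNorm {Ω : Type*} [MeasurableSpace Ω] (V : Ω → ℝ) (μ : SignedMeasure Ω) : ℝ :=
  (∫⁻ x, ENNReal.ofReal (V x) ∂μ.totalVariation).toReal

/-- Membership in `M_V`: finite `V`-weighted total variation. -/
def MemW {Ω : Type*} [MeasurableSpace Ω] (V : Ω → ℝ) (μ : SignedMeasure Ω) : Prop :=
  ∫⁻ x, ENNReal.ofReal (V x) ∂μ.totalVariation ≠ ⊤

/-- A stochastic operator: a positive, mass-preserving linear operator on finite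
signed measures (equivalently, one mapping probability measures to probability measures). -/
def IsStochastic {Ω : Type*} [MeasurableSpace Ω]
    (S : SignedMeasure Ω →ₗ[ℝ] SignedMeasure Ω) : Prop :=
  (∀ μ : SignedMeasure Ω, 0 ≤ μ → 0 ≤ S μ) ∧
  (∀ μ : SignedMeasure Ω, S μ Set.univ = μ Set.univ)

/-- The signed measure associated to a probability measure. -/
noncomputable def probToSigned {Ω : Type*} [MeasurableSpace Ω] (μ : Measure Ω)
    (h : IsProbabilityMeasure μ) : SignedMeasure Ω :=
  @Measure.toSignedMeasure Ω _ μ (by haveI := h; infer_instance)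

section Aux

variable {Ω : Type*} [MeasurableSpace Ω]

lemma aux_apply_le_univ {ξ : SignedMeasure Ω} (hξ : 0 ≤ ξ) {i : Set Ω}
    (hi : MeasurableSet i) : ξ i ≤ ξ Set.univ := by
  have h1 : ξ Set.univ = ξ i + ξ iᶜ := by
    rw [← VectorMeasure.of_union disjoint_compl_right hi hi.compl, Set.union_compl_self]
  have h2 : (0 : ℝ) ≤ ξ iᶜ := by
    simpa using (VectorMeasure.le_iff'.1 hξ) iᶜ
  linarith

lemma aux_nonneg_apply {ξ : SignedMeasure Ω} (hξ : 0 ≤ ξ) (i : Set Ω) : (0:ℝ) ≤ ξ i := by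
  simpa using (VectorMeasure.le_iff'.1 hξ) i

end Aux

/-- The Harris condition on the sublevel set `C = {V ≤ R}` implies the local
coupling estimate (Lemma 3.1). -/
theorem harris_implies_local_coupling {Ω : Type*} [MeasurableSpace Ω]
    (V : Ω → ℝ) (hVm : Measurable V) (hV1 : ∀ x, 1 ≤ V x)
    (R : ℝ) (hR : 0 < R)
    (S : SignedMeasure Ω →ₗ[ℝ] SignedMeasure Ω) (hS : IsStochastic S)
    (α : ℝ) (hα0 : 0 < α) (hα1 : α < 1)
    (η : Measure Ω) [IsProbabilityMeasure η]
    (hHarris : ∀ μ : SignedMeasure Ω, 0 ≤ μ →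
      (α * μ {x | V x ≤ R}) • η.toSignedMeasure ≤ S μ)
    (A : ℝ) (hA : A ∈ Set.Ioo 0 (R / 2))
    (ν : SignedMeasure Ω) (hν0 : ν Set.univ = 0) (hνfin : MemW V ν)
    (hνV : wNorm V ν ≤ A * tvNorm ν) :
    tvNorm (S ν) ≤ (1 - α * (1 - 2 * A / R)) * tvNorm ν := by
  obtain ⟨hSpos, hSmass⟩ := hS
  obtain ⟨hA0, hA2⟩ := hA
  set C : Set Ω := {x | V x ≤ R} with hCdef
  have hCm : MeasurableSet C := measurableSet_le hVm measurable_const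
  set J := ν.toJordanDecomposition with hJ
  set p : SignedMeasure Ω := J.posPart.toSignedMeasure with hp
  set n : SignedMeasure Ω := J.negPart.toSignedMeasure with hn
  have hνpn : ν = p - n := by
    conv_lhs => rw [← ν.toSignedMeasure_toJordanDecomposition]
    rfl
  -- masses
  set m : ℝ := (J.posPart Set.univ).toReal with hm
  set pC : ℝ := (J.posPart C).toReal with hpC
  set nC : ℝ := (J.negPart C).toReal with hnC
  have hpfin : J.posPart Set.univ ≠ ⊤ := measure_ne_top _ _
  have hnfin : J.negPart Set.univ ≠ ⊤ := measure_ne_top _ _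
  have hpuniv : p Set.univ = m := Measure.toSignedMeasure_apply_measurable MeasurableSet.univ
  have hnuniv : n Set.univ = (J.negPart Set.univ).toReal :=
    Measure.toSignedMeasure_apply_measurable MeasurableSet.univ
  have hnm : (J.negPart Set.univ).toReal = m := by
    have := hν0
    rw [hνpn, VectorMeasure.sub_apply, hpuniv, hnuniv] at this
    linarith
  have hm0 : 0 ≤ m := ENNReal.toReal_nonneg
  have hpC0 : 0 ≤ pC := ENNReal.toReal_nonneg
  have hnC0 : 0 ≤ nC := ENNReal.toReal_nonneg
  have hpCm : pC ≤ m := by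
    rw [hpC, hm]
    exact ENNReal.toReal_mono hpfin (measure_mono (Set.subset_univ _))
  have hnCm : nC ≤ m := by
    rw [hnC, ← hnm]
    exact ENNReal.toReal_mono hnfin (measure_mono (Set.subset_univ _))
  haveI : IsFiniteMeasure ν.totalVariation := by
    unfold MeasureTheory.SignedMeasure.totalVariation; infer_instance
  -- total variation of ν
  have htvadd : ∀ s : Set Ω, (ν.totalVariation s).toReal
      = (J.posPart s).toReal + (J.negPart s).toReal := by
    intro s
    rw [SignedMeasure.totalVariation, Measure.add_apply,
      ENNReal.toReal_add (measure_ne_top _ _) (measure_ne_top _ _)]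
  have htvν : tvNorm ν = 2 * m := by
    rw [tvNorm, htvadd, hnm]; ring
  -- lower bound on |ν|(C) from the weight condition
  have hVkey : ENNReal.ofReal R * ν.totalVariation Cᶜ
      ≤ ∫⁻ x, ENNReal.ofReal (V x) ∂ν.totalVariation := by
    calc ENNReal.ofReal R * ν.totalVariation Cᶜ
        = ∫⁻ _ in Cᶜ, ENNReal.ofReal R ∂ν.totalVariation := by
          rw [setLIntegral_const]
      _ ≤ ∫⁻ x in Cᶜ, ENNReal.ofReal (V x) ∂ν.totalVariation := by
          refine setLIntegral_mono (hVm.ennreal_ofReal) ?_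
          intro x hx
          exact ENNReal.ofReal_le_ofReal (le_of_lt (not_le.1 hx))
      _ ≤ ∫⁻ x, ENNReal.ofReal (V x) ∂ν.totalVariation :=
          setLIntegral_le_lintegral _ _
  have htvCc : R * (ν.totalVariation Cᶜ).toReal ≤ wNorm V ν := by
    have := ENNReal.toReal_mono hνfin hVkey
    rwa [ENNReal.toReal_mul, ENNReal.toReal_ofReal hR.le] at this
  have htvsplit : (ν.totalVariation C).toReal + (ν.totalVariation Cᶜ).toReal
      = (ν.totalVariation Set.univ).toReal := by
    rw [← ENNReal.toReal_add (measure_ne_top _ _) (measure_ne_top _ _),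
      ← measure_union disjoint_compl_right hCm.compl, Set.union_compl_self]
  have hCsum : 2 * m - (pC + nC) ≤ (A / R) * (2 * m) := by
    have h1 : (ν.totalVariation C).toReal = pC + nC := htvadd C
    have h2 : (ν.totalVariation Set.univ).toReal = 2 * m := htvν
    have h3 : R * (2 * m - (pC + nC)) ≤ A * (2 * m) := by
      have := htvCc
      have h4 : (ν.totalVariation Cᶜ).toReal = 2 * m - (pC + nC) := by
        rw [← h2, ← htvsplit, h1]; ring
      rw [h4] at this
      calc R * (2 * m - (pC + nC)) ≤ wNorm V ν := this
        _ ≤ A * tvNorm ν := hνV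
        _ = A * (2 * m) := by rw [htvν]
    rw [div_mul_eq_mul_div, le_div_iff₀ hR]
    linarith
  have hminkey : m * (1 - 2 * A / R) ≤ min pC nC := by
    have hAR : A / R * (2 * m) = 2 * A / R * m := by ring
    have : m - 2 * A / R * m ≤ min pC nC := by
      rcases le_total pC nC with h | h
      · rw [min_eq_left h]; rw [hAR] at hCsum; linarith
      · rw [min_eq_right h]; rw [hAR] at hCsum; linarith
    linarith [this]
  -- the coupling constant
  set c : ℝ := α * min pC nC with hc
  have hc0 : 0 ≤ c := mul_nonneg hα0.le (le_min hpC0 hnC0)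
  -- Harris bounds
  have hppos : 0 ≤ p := Measure.zero_le_toSignedMeasure _
  have hnpos : 0 ≤ n := Measure.zero_le_toSignedMeasure _
  have hpCapp : p C = pC := Measure.toSignedMeasure_apply_measurable hCm
  have hnCapp : n C = nC := Measure.toSignedMeasure_apply_measurable hCm
  have hηpos : 0 ≤ η.toSignedMeasure := Measure.zero_le_toSignedMeasure _
  have hsmul_mono : ∀ a b : ℝ, a ≤ b →
      a • η.toSignedMeasure ≤ b • η.toSignedMeasure := by
    intro a b hab
    rw [VectorMeasure.le_iff']
    intro i
    rw [VectorMeasure.smul_apply, VectorMeasure.smul_apply]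
    exact mul_le_mul_of_nonneg_right hab (aux_nonneg_apply hηpos i)
  have hHp : c • η.toSignedMeasure ≤ S p := by
    refine le_trans (hsmul_mono c (α * p C) ?_) (hHarris p hppos)
    rw [hpCapp, hc]
    exact mul_le_mul_of_nonneg_left (min_le_left _ _) hα0.le
  have hHn : c • η.toSignedMeasure ≤ S n := by
    refine le_trans (hsmul_mono c (α * n C) ?_) (hHarris n hnpos)
    rw [hnCapp, hc]
    exact mul_le_mul_of_nonneg_left (min_le_right _ _) hα0.le
  -- the nonnegative remainders
  set ξ₁ : SignedMeasure Ω := S p - c • η.toSignedMeasure with hξ₁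
  set ξ₂ : SignedMeasure Ω := S n - c • η.toSignedMeasure with hξ₂
  have hξ₁pos : 0 ≤ ξ₁ := by
    rw [VectorMeasure.le_iff']
    intro i
    have := VectorMeasure.le_iff'.1 hHp i
    simp only [hξ₁, VectorMeasure.sub_apply, VectorMeasure.zero_apply]
    linarith
  have hξ₂pos : 0 ≤ ξ₂ := by
    rw [VectorMeasure.le_iff']
    intro i
    have := VectorMeasure.le_iff'.1 hHn i
    simp only [hξ₂, VectorMeasure.sub_apply, VectorMeasure.zero_apply]
    linarith
  have hηuniv : η.toSignedMeasure Set.univ = 1 := by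
    rw [Measure.toSignedMeasure_apply_measurable MeasurableSet.univ, probReal_univ]
  have hξ₁univ : ξ₁ Set.univ = m - c := by
    rw [hξ₁, VectorMeasure.sub_apply, VectorMeasure.smul_apply, hSmass, hpuniv, hηuniv, smul_eq_mul]
    ring
  have hξ₂univ : ξ₂ Set.univ = m - c := by
    rw [hξ₂, VectorMeasure.sub_apply, VectorMeasure.smul_apply, hSmass, hnuniv, hnm, hηuniv, smul_eq_mul]
    ring
  -- Sν = ξ₁ - ξ₂
  have hSν : S ν = ξ₁ - ξ₂ := by
    rw [hνpn, map_sub, hξ₁, hξ₂]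
    abel
  -- Hahn decomposition of S ν
  obtain ⟨i, hi₁, hi₂, hi₃, hμpos, hμneg⟩ := (S ν).toJordanDecomposition_spec
  have htvSν : tvNorm (S ν) = (S ν) i - (S ν) iᶜ := by
    rw [tvNorm, SignedMeasure.totalVariation, Measure.add_apply, hμpos, hμneg,
      SignedMeasure.toMeasureOfZeroLE_apply _ hi₂ hi₁ MeasurableSet.univ,
      SignedMeasure.toMeasureOfLEZero_apply _ hi₃ hi₁.compl MeasurableSet.univ,
      ENNReal.toReal_add (by exact ENNReal.coe_ne_top) (by exact ENNReal.coe_ne_top)]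
    simp [Set.inter_univ]
    ring
  have hbound1 : (S ν) i ≤ m - c := by
    have h1 : (S ν) i = ξ₁ i - ξ₂ i := by rw [hSν, VectorMeasure.sub_apply]
    have h2 : ξ₁ i ≤ ξ₁ Set.univ := aux_apply_le_univ hξ₁pos hi₁
    have h3 : 0 ≤ ξ₂ i := aux_nonneg_apply hξ₂pos i
    rw [h1, hξ₁univ] at *
    linarith
  have hbound2 : -(S ν) iᶜ ≤ m - c := by
    have h1 : (S ν) iᶜ = ξ₁ iᶜ - ξ₂ iᶜ := by rw [hSν, VectorMeasure.sub_apply]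
    have h2 : ξ₂ iᶜ ≤ ξ₂ Set.univ := aux_apply_le_univ hξ₂pos hi₁.compl
    have h3 : 0 ≤ ξ₁ iᶜ := aux_nonneg_apply hξ₁pos iᶜ
    rw [h1] at *
    rw [hξ₂univ] at h2
    linarith
  -- conclusion
  rw [htvν]
  have hkey : tvNorm (S ν) ≤ 2 * (m - c) := by
    rw [htvSν]; linarith
  have hck : α * (m * (1 - 2 * A / R)) ≤ c := by
    rw [hc]
    exact mul_le_mul_of_nonneg_left hminkey hα0.le
  calc tvNorm (S ν) ≤ 2 * (m - c) := hkey
    _ ≤ 2 * (m - α * (m * (1 - 2 * A / R))) := by linarith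
    _ = (1 - α * (1 - 2 * A / R)) * (2 * m) := by ring
end

section
/- Let S be a stochastic operator on M_V satisfying (i) the operator Lyapunov condition ‖Sμ‖_V ≤ γ_L‖μ‖_V + K‖μ‖_TV for all μ ∈ M_V with 0 < γ_L < 1, K ≥ 0, and (ii) the local coupling condition: there are γ_H ∈ (0,1) and A > 0 with K/A < 1 − γ_L such that every zero-mean ν ∈ N_V with ‖ν‖_V ≤ A‖ν‖_TV satisfies ‖Sν‖_TV ≤ γ_H‖ν‖_TV. Then there exist β > 0 and γ ∈ (0,1) such that the norm |||μ||| := ‖μ‖_TV + β‖μ‖_V satisfies |||Sν||| ≤ γ|||ν||| for all zero-mean ν ∈ N_V. -/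
open MeasureTheory

lemma tvNorm_nonneg {Ω : Type*} [MeasurableSpace Ω] (μ : SignedMeasure Ω) : 0 ≤ tvNorm μ :=
  ENNReal.toReal_nonneg

lemma tvNorm_eq_posPart_add {Ω : Type*} [MeasurableSpace Ω] (μ : SignedMeasure Ω) :
    tvNorm μ = (μ.toJordanDecomposition.posPart Set.univ).toReal
      + (μ.toJordanDecomposition.negPart Set.univ).toReal := by
  rw [tvNorm, SignedMeasure.totalVariation, Measure.add_apply,
    ENNReal.toReal_add (measure_ne_top _ _) (measure_ne_top _ _)]

lemma tvNorm_exists_posSet {Ω : Type*} [MeasurableSpace Ω] (μ : SignedMeasure Ω) :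
    ∃ P : Set Ω, MeasurableSet P ∧ tvNorm μ = μ P - μ Pᶜ := by
  obtain ⟨i, hi₁, hi₂, hi₃, hp, hn⟩ := μ.toJordanDecomposition_spec
  refine ⟨i, hi₁, ?_⟩
  rw [tvNorm_eq_posPart_add, hp, hn,
    SignedMeasure.toMeasureOfZeroLE_apply _ hi₂ hi₁ MeasurableSet.univ,
    SignedMeasure.toMeasureOfLEZero_apply _ hi₃ hi₁.compl MeasurableSet.univ]
  simp [Set.inter_univ, sub_eq_add_neg]

lemma nonneg_apply {Ω : Type*} [MeasurableSpace Ω] {τ : SignedMeasure Ω} (h : 0 ≤ τ)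
    (P : Set Ω) : 0 ≤ τ P := by
  by_cases hP : MeasurableSet P
  · exact VectorMeasure.le_iff.mp h P hP
  · rw [VectorMeasure.not_measurable _ hP]

lemma apply_le_univ {Ω : Type*} [MeasurableSpace Ω] {τ : SignedMeasure Ω} (h : 0 ≤ τ)
    {P : Set Ω} (hP : MeasurableSet P) : τ P ≤ τ Set.univ := by
  have := VectorMeasure.of_union (disjoint_compl_right (a := P)) hP hP.compl (v := τ)
  rw [Set.union_compl_self] at this
  have h2 := nonneg_apply h Pᶜ
  linarith

lemma tv_nonexpansive {Ω : Type*} [MeasurableSpace Ω]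
    (S : SignedMeasure Ω →ₗ[ℝ] SignedMeasure Ω) (hS : IsStochastic S)
    (ν : SignedMeasure Ω) : tvNorm (S ν) ≤ tvNorm ν := by
  set p := ν.toJordanDecomposition.posPart.toSignedMeasure with hp
  set n := ν.toJordanDecomposition.negPart.toSignedMeasure with hn
  have hν : ν = p - n := by
    conv_lhs => rw [← ν.toSignedMeasure_toJordanDecomposition]
    rfl
  have hSp : 0 ≤ S p := hS.1 _ (Measure.zero_le_toSignedMeasure _)
  have hSn : 0 ≤ S n := hS.1 _ (Measure.zero_le_toSignedMeasure _)
  obtain ⟨P, hPm, hPeq⟩ := tvNorm_exists_posSet (S ν)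
  have hSν : S ν = S p - S n := by rw [hν, map_sub]
  have h1 : (S ν) P = (S p) P - (S n) P := by rw [hSν, VectorMeasure.sub_apply]
  have h2 : (S ν) Pᶜ = (S p) Pᶜ - (S n) Pᶜ := by rw [hSν, VectorMeasure.sub_apply]
  have hpu : (S p) Set.univ = (ν.toJordanDecomposition.posPart Set.univ).toReal := by
    rw [hS.2, hp, Measure.toSignedMeasure_apply_measurable MeasurableSet.univ]; rfl
  have hnu : (S n) Set.univ = (ν.toJordanDecomposition.negPart Set.univ).toReal := by
    rw [hS.2, hn, Measure.toSignedMeasure_apply_measurable MeasurableSet.univ]; rfl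
  have b1 : (S p) P ≤ (S p) Set.univ := apply_le_univ hSp hPm
  have b2 : (S n) Pᶜ ≤ (S n) Set.univ := apply_le_univ hSn hPm.compl
  have b3 : 0 ≤ (S n) P := nonneg_apply hSn P
  have b4 : 0 ≤ (S p) Pᶜ := nonneg_apply hSp Pᶜ
  rw [hPeq, tvNorm_eq_posPart_add]
  linarith

set_option maxHeartbeats 1000000 in
/-- Under the operator Lyapunov condition and the local coupling condition with
`K/A < 1 - γ_L`, the equivalent norm `|||μ||| = ‖μ‖_TV + β‖μ‖_V` is strictly
contracted by `S` on zero-mean measures, for a suitable `β > 0`. -/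
theorem harris_contraction_equivalent_norm {Ω : Type*} [MeasurableSpace Ω]
    (V : Ω → ℝ) (hVm : Measurable V) (hV1 : ∀ x, 1 ≤ V x)
    (S : SignedMeasure Ω →ₗ[ℝ] SignedMeasure Ω) (hS : IsStochastic S)
    (hSV : ∀ μ : SignedMeasure Ω, MemW V μ → MemW V (S μ))
    (γL K : ℝ) (hγL0 : 0 < γL) (hγL1 : γL < 1) (hK : 0 ≤ K)
    (hLyap : ∀ μ : SignedMeasure Ω, MemW V μ →
      wNorm V (S μ) ≤ γL * wNorm V μ + K * tvNorm μ)
    (γH A : ℝ) (hγH0 : 0 < γH) (hγH1 : γH < 1) (hA : 0 < A)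
    (hKA : K / A < 1 - γL)
    (hCoup : ∀ ν : SignedMeasure Ω, MemW V ν → ν Set.univ = 0 →
      wNorm V ν ≤ A * tvNorm ν → tvNorm (S ν) ≤ γH * tvNorm ν) :
    ∃ β > 0, ∃ γ ∈ Set.Ioo (0:ℝ) 1,
      ∀ ν : SignedMeasure Ω, MemW V ν → ν Set.univ = 0 →
        tvNorm (S ν) + β * wNorm V (S ν) ≤ γ * (tvNorm ν + β * wNorm V ν) := by

  -- choose β and γ
  set β : ℝ := (1 - γH) / (2 * (K + 1)) with hβdef
  have hβ : 0 < β := by rw [hβdef]; exact div_pos (by linarith) (by positivity)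
  have hβK : γH + β * K < 1 := by
    have h1 : β * K < (1 - γH) / 2 := by
      rw [hβdef]
      rw [div_mul_eq_mul_div, div_lt_div_iff₀ (by positivity) (by norm_num)]
      nlinarith
    linarith
  set γ₂ : ℝ := (1 + β * K + β * A * γL) / (1 + β * A) with hγ₂def
  have hden : (0:ℝ) < 1 + β * A := by positivity
  have hγ₂eq : γ₂ * (1 + β * A) = 1 + β * K + β * A * γL := by
    rw [hγ₂def, div_mul_cancel₀ _ hden.ne']
  have hKA' : K < A * (1 - γL) := by
    rw [div_lt_iff₀ hA] at hKA; linarith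
  have hγ₂1 : γ₂ < 1 := by
    rw [hγ₂def, div_lt_one hden]; nlinarith
  have hγ₂L : γL ≤ γ₂ := by
    rw [hγ₂def, le_div_iff₀ hden]; nlinarith
  set γ : ℝ := max (γH + β * K) γ₂ with hγdef
  have hγ0 : 0 < γ :=
    lt_of_lt_of_le (add_pos_of_pos_of_nonneg hγH0 (mul_nonneg hβ.le hK)) (le_max_left _ _)
  have hγ1 : γ < 1 := max_lt hβK hγ₂1
  have hγL : γL ≤ γ := le_trans hγ₂L (le_max_right _ _)
  refine ⟨β, hβ, γ, ⟨hγ0, hγ1⟩, fun ν hνW hν0 => ?_⟩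
  have hTV : 0 ≤ tvNorm ν := tvNorm_nonneg ν
  have hW : 0 ≤ wNorm V ν := ENNReal.toReal_nonneg
  have hLy := hLyap ν hνW
  have hTV' : 0 ≤ tvNorm (S ν) := tvNorm_nonneg (S ν)
  by_cases hcase : wNorm V ν ≤ A * tvNorm ν
  · -- coupling regime
    have hC := hCoup ν hνW hν0 hcase
    have h1 : γH + β * K ≤ γ := le_max_left _ _
    nlinarith [mul_le_mul_of_nonneg_left hLy hβ.le,
      mul_le_mul_of_nonneg_right h1 hTV,
      mul_le_mul_of_nonneg_left (mul_le_mul_of_nonneg_right hγL hW) hβ.le]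
  · -- Lyapunov regime
    push_neg at hcase
    have hE := tv_nonexpansive S hS ν
    have h2 : γ₂ ≤ γ := le_max_right _ _
    have hATV : A * tvNorm ν ≤ wNorm V ν := le_of_lt hcase
    have e1 : γ₂ * tvNorm ν + γ₂ * β * A * tvNorm ν
        = tvNorm ν + β * K * tvNorm ν + β * A * γL * tvNorm ν := by
      linear_combination tvNorm ν * hγ₂eq
    have key : tvNorm ν + β * (γL * wNorm V ν + K * tvNorm ν)
        ≤ γ₂ * (tvNorm ν + β * wNorm V ν) := by
      have hcoef : 0 ≤ β * (γ₂ - γL) := mul_nonneg hβ.le (by linarith)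
      nlinarith [mul_le_mul_of_nonneg_left hATV hcoef]
    have hmono : γ₂ * (tvNorm ν + β * wNorm V ν) ≤ γ * (tvNorm ν + β * wNorm V ν) := by
      apply mul_le_mul_of_nonneg_right h2
      have := mul_nonneg hβ.le hW
      linarith
    calc tvNorm (S ν) + β * wNorm V (S ν)
        ≤ tvNorm ν + β * (γL * wNorm V ν + K * tvNorm ν) := by
          nlinarith [mul_le_mul_of_nonneg_left hLy hβ.le]
      _ ≤ γ₂ * (tvNorm ν + β * wNorm V ν) := key
      _ ≤ γ * (tvNorm ν + β * wNorm V ν) := hmono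
end

section
/- Let γ_L, γ_H ∈ (0,1), K ≥ 0, A > 0 with 1 − γ_L > K/A. Then both eigenvalues of the 2×2 matrix M = [[γ_L, K], [(1−γ_H)/A, γ_H]] have modulus strictly less than 1. Consequently, any pair of nonnegative sequences (v_n), (m_n) satisfying v_{n+1} ≤ γ_L v_n + K m_n and m_{n+1} ≤ ((1−γ_H)/A) v_n + γ_H m_n decays geometrically: there are C > 0 and γ ∈ (0,1) with v_n + m_n ≤ Cγⁿ(v_0 + m_0). -/
/-- If `1 - γ_L > K/A` then both eigenvalues of the matrix
`[[γ_L, K], [(1-γ_H)/A, γ_H]]` have modulus strictly less than `1`, and any pair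
of nonnegative sequences satisfying the corresponding coordinatewise recursion
inequalities decays geometrically. -/
theorem matrix_spectral_radius_and_geometric_decay
    (γL γH K A : ℝ) (hγL0 : 0 < γL) (hγL1 : γL < 1) (hγH0 : 0 < γH) (hγH1 : γH < 1)
    (hK : 0 ≤ K) (hA : 0 < A) (hKA : 1 - γL > K / A) :
    (∀ z ∈ spectrum ℂ (Matrix.of ![![(γL : ℂ), (K : ℂ)], ![(((1 - γH) / A : ℝ) : ℂ), (γH : ℂ)]]),
      ‖z‖ < 1) ∧
    (∀ v m : ℕ → ℝ, (∀ n, 0 ≤ v n) → (∀ n, 0 ≤ m n) →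
      (∀ n, v (n + 1) ≤ γL * v n + K * m n) →
      (∀ n, m (n + 1) ≤ ((1 - γH) / A) * v n + γH * m n) →
      ∃ C > 0, ∃ γ ∈ Set.Ioo (0:ℝ) 1, ∀ n, v n + m n ≤ C * γ ^ n * (v 0 + m 0)) := by
  set c : ℝ := (1 - γH) / A with hc
  have hc0 : 0 < c := div_pos (by linarith) hA
  have hKc : K * c < (1 - γL) * (1 - γH) := by
    have : K * c = (K / A) * (1 - γH) := by rw [hc]; ring
    rw [this]
    exact mul_lt_mul_of_pos_right hKA (by linarith)
  constructor
  · intro z hz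
    rw [spectrum.mem_iff, Matrix.isUnit_iff_isUnit_det, isUnit_iff_ne_zero, not_not] at hz
    simp [Matrix.det_fin_two, Matrix.algebraMap_matrix_apply] at hz
    have hdet : (z - γL) * (z - γH) = (K * c : ℝ) := by
      push_cast
      linear_combination hz
    by_contra hlt
    push_neg at hlt
    have h1 : (1 : ℝ) - γL ≤ ‖z - γL‖ := by
      have := norm_sub_norm_le z (γL : ℂ)
      simp only [Complex.norm_real, Real.norm_eq_abs, abs_of_pos hγL0] at this
      linarith
    have h2 : (1 : ℝ) - γH ≤ ‖z - γH‖ := by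
      have := norm_sub_norm_le z (γH : ℂ)
      simp only [Complex.norm_real, Real.norm_eq_abs, abs_of_pos hγH0] at this
      linarith
    have habs : ‖(z - γL) * (z - γH)‖ = K * c := by
      rw [hdet, Complex.norm_real, Real.norm_eq_abs, abs_of_nonneg (mul_nonneg hK hc0.le)]
    rw [norm_mul] at habs
    have : (1 - γL) * (1 - γH) ≤ K * c := by
      rw [← habs]
      exact mul_le_mul h1 h2 (by linarith) (norm_nonneg _)
    linarith
  · intro v m hv hm hvrec hmrec
    -- weight
    set w : ℝ := (K + A * (1 - γL)) / (2 * (1 - γH)) with hw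
    clear_value w
    have hw0 : 0 < w := by
      rw [hw]
      apply div_pos
      · nlinarith
      · linarith
    have hKw : K < A * (1 - γL) := by
      have := (div_lt_iff₀ hA).mp hKA
      linarith
    have h1γH : (1:ℝ) - γH ≠ 0 := by linarith
    have hA' : A ≠ 0 := ne_of_gt hA
    have hwc : γL + w * c < 1 := by
      have hwc' : w * c = (K + A * (1 - γL)) / (2 * A) := by
        rw [hw, hc]; field_simp
      rw [hwc']
      have : (K + A * (1 - γL)) / (2 * A) < 1 - γL := by
        rw [div_lt_iff₀ (by linarith)]; nlinarith
      linarith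
    have hKwγ : K / w + γH < 1 := by
      have h1 : K / w < 1 - γH := by
        rw [div_lt_iff₀ hw0]
        have : (1 - γH) * w = (K + A * (1 - γL)) / 2 := by
          rw [hw]; field_simp
        rw [this]
        linarith
      linarith
    set γ : ℝ := max (γL + w * c) (K / w + γH) with hγ
    clear_value γ
    have hγ0 : 0 < γ := by
      rw [hγ]; exact lt_of_lt_of_le (add_pos hγL0 (mul_pos hw0 hc0)) (le_max_left _ _)
    have hγ1 : γ < 1 := by rw [hγ]; exact max_lt hwc hKwγ
    have key : ∀ n, v n + w * m n ≤ γ ^ n * (v 0 + w * m 0) := by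
      intro n
      induction n with
      | zero => simp
      | succ n ih =>
        have h1 : v (n+1) + w * m (n+1) ≤ γ * (v n + w * m n) := by
          have e1 := hvrec n
          have e2 := hmrec n
          have hγa : γL + w * c ≤ γ := by rw [hγ]; exact le_max_left _ _
          have hγb : K / w + γH ≤ γ := by rw [hγ]; exact le_max_right _ _
          have hKle : K ≤ (γ - γH) * w := by
            have : K / w ≤ γ - γH := by linarith
            calc K = K / w * w := by field_simp
            _ ≤ (γ - γH) * w := mul_le_mul_of_nonneg_right this hw0.le
          have : v (n+1) + w * m (n+1) ≤ (γL + w * c) * v n + (K + w * γH) * m n := by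
            nlinarith [hw0.le, hv n, hm n]
          calc v (n+1) + w * m (n+1) ≤ (γL + w * c) * v n + (K + w * γH) * m n := this
          _ ≤ γ * v n + γ * (w * m n) := by nlinarith [hv n, hm n]
          _ = γ * (v n + w * m n) := by ring
        calc v (n+1) + w * m (n+1) ≤ γ * (v n + w * m n) := h1
        _ ≤ γ * (γ ^ n * (v 0 + w * m 0)) := by
            apply mul_le_mul_of_nonneg_left ih hγ0.le
        _ = γ ^ (n+1) * (v 0 + w * m 0) := by ring
    refine ⟨(1 + 1 / w) * (1 + w), by positivity, γ, ⟨hγ0, hγ1⟩, fun n => ?_⟩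
    have hww : 1 / w * w = 1 := by field_simp
    have h1 : v n + m n ≤ (1 + 1 / w) * (v n + w * m n) := by
      have hinv : 0 < 1 / w := by positivity
      nlinarith [hv n, hm n, mul_nonneg hinv.le (hv n), mul_nonneg hw0.le (hm n),
        mul_nonneg hinv.le (mul_nonneg hw0.le (hm n))]
    have h2 : v 0 + w * m 0 ≤ (1 + w) * (v 0 + m 0) := by
      nlinarith [hv 0, hm 0, hw0]
    calc v n + m n ≤ (1 + 1 / w) * (v n + w * m n) := h1
    _ ≤ (1 + 1 / w) * (γ ^ n * (v 0 + w * m 0)) := by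
        apply mul_le_mul_of_nonneg_left (key n) (by positivity)
    _ ≤ (1 + 1 / w) * (γ ^ n * ((1 + w) * (v 0 + m 0))) := by
        apply mul_le_mul_of_nonneg_left
          (mul_le_mul_of_nonneg_left h2 (pow_nonneg hγ0.le n)) (by positivity)
    _ = (1 + 1 / w) * (1 + w) * γ ^ n * (v 0 + m 0) := by ring
end

section
/- Let M > 0, 0 < δ ≤ ∞, and ζ : (0, δ) → (0, ∞) with lim_{λ→0} ζ(λ)/λ = 0. Suppose a nonnegative sequence (u_n) satisfies u_0 ≤ M and u_{n+1} ≤ (1 − λ)u_n + Mζ(λ) for all n ≥ 0 and all λ ∈ (0, δ). Then u_n ≤ M F^{-1}(n) for all n ≥ 0, where F(u) = ∫_u^1 dv/ζ*(v) and ζ*(v) = sup_{λ∈(0,δ)}(λv − ζ(λ)) is the Legendre transform of ζ. -/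
open scoped ENNReal
/-- Difference inequality lemma (Lemma 4.11): if `u₀ ≤ M` and
`u_{n+1} ≤ (1-λ)u_n + Mζ(λ)` for all `λ ∈ (0, δ)`, then `u_n ≤ M F⁻¹(n)` where
`F(u) = ∫_u^1 dv/ζ*(v)` and `ζ*` is the Legendre transform of `ζ` (with the
convention `1/ζ*(v) = 0` when `ζ*(v) = +∞`). -/
theorem difference_inequality_subgeometric
    (M : ℝ) (hM : 0 < M)
    (δ : ℝ≥0∞) (hδ : 0 < δ)
    (ζ : ℝ → ℝ)
    (hζ_pos : ∀ l : ℝ, 0 < l → ENNReal.ofReal l < δ → 0 < ζ l)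
    (hζ_lim : Filter.Tendsto (fun l => ζ l / l) (nhdsWithin 0 (Set.Ioi 0)) (nhds 0))
    (u : ℕ → ℝ) (hu_nonneg : ∀ n, 0 ≤ u n) (hu0 : u 0 ≤ M)
    (hrec : ∀ n, ∀ l : ℝ, 0 < l → ENNReal.ofReal l < δ →
      u (n + 1) ≤ (1 - l) * u n + M * ζ l)
    (ζstar : ℝ → ℝ≥0∞)
    (hζstar : ∀ v, ζstar v =
      ⨆ l ∈ {l : ℝ | 0 < l ∧ ENNReal.ofReal l < δ}, ENNReal.ofReal (l * v - ζ l))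
    (F : ℝ → ℝ) (hF : ∀ w, F w = ∫ v in w..1, ((ζstar v)⁻¹).toReal)
    (Finv : ℝ → ℝ)
    (hFinv : ∀ t, 0 ≤ t → Finv t ∈ Set.Ioc (0:ℝ) 1 ∧ F (Finv t) = t) :
    ∀ n : ℕ, u n ≤ M * Finv n := by
  -- small positive reals are admissible
  obtain ⟨ε₀, hε₀pos, hε₀⟩ : ∃ ε > (0:ℝ), ∀ l : ℝ, 0 < l → l < ε → ENNReal.ofReal l < δ := by
    rcases eq_or_ne δ ⊤ with h | h
    · exact ⟨1, one_pos, fun l _ _ => h ▸ ENNReal.ofReal_lt_top⟩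
    · refine ⟨δ.toReal, ENNReal.toReal_pos hδ.ne' h, fun l hl hlt => ?_⟩
      rwa [ENNReal.ofReal_lt_iff_lt_toReal hl.le h]
  -- monotonicity of ζstar
  have hmono : ∀ a b : ℝ, a ≤ b → ζstar a ≤ ζstar b := by
    intro a b hab
    rw [hζstar a, hζstar b]
    refine iSup₂_mono fun l hl => ENNReal.ofReal_le_ofReal ?_
    have : l * a ≤ l * b := mul_le_mul_of_nonneg_left hab hl.1.le
    linarith
  -- positivity of ζstar on positive reals
  have hpos : ∀ v : ℝ, 0 < v → 0 < ζstar v := by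
    intro v hv
    have h1 : ∀ᶠ l in nhdsWithin 0 (Set.Ioi 0), ζ l / l < v / 2 :=
      hζ_lim.eventually (gt_mem_nhds (half_pos hv))
    have h2 : Set.Ioo (0:ℝ) ε₀ ∈ nhdsWithin (0:ℝ) (Set.Ioi 0) :=
      Ioo_mem_nhdsGT_of_mem ⟨le_refl 0, hε₀pos⟩
    obtain ⟨l, hlv, hl0, hlε⟩ := (h1.and (Filter.eventually_of_mem h2 fun x hx => hx)).exists
    have hlδ : ENNReal.ofReal l < δ := hε₀ l hl0 hlε
    have hζl : ζ l < l * (v / 2) := by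
      have := (div_lt_iff₀ hl0).mp hlv
      linarith
    have hlow : (0:ℝ) < l * v - ζ l := by nlinarith
    calc (0:ℝ≥0∞) < ENNReal.ofReal (l * v - ζ l) := ENNReal.ofReal_pos.mpr hlow
      _ ≤ ζstar v := by
          rw [hζstar v]
          exact le_iSup₂ (f := fun l _ => ENNReal.ofReal (l * v - ζ l)) l ⟨hl0, hlδ⟩
  -- ζ tends to 0
  have hζ0 : Filter.Tendsto ζ (nhdsWithin 0 (Set.Ioi 0)) (nhds 0) := by
    have hid : Filter.Tendsto (fun l : ℝ => l) (nhdsWithin 0 (Set.Ioi 0)) (nhds 0) :=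
      Filter.tendsto_id.mono_left nhdsWithin_le_nhds
    have := hζ_lim.mul hid
    rw [zero_mul] at this
    refine this.congr' ?_
    filter_upwards [self_mem_nhdsWithin] with l (hl : (0:ℝ) < l)
    field_simp
  -- zero is absorbing
  have hzero : ∀ n, u n = 0 → u (n + 1) = 0 := by
    intro n hn
    have hev : ∀ᶠ l in nhdsWithin (0:ℝ) (Set.Ioi 0), u (n + 1) ≤ M * ζ l := by
      have h2 : Set.Ioo (0:ℝ) ε₀ ∈ nhdsWithin (0:ℝ) (Set.Ioi 0) :=
        Ioo_mem_nhdsGT_of_mem ⟨le_refl 0, hε₀pos⟩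
      filter_upwards [h2] with l hl
      have := hrec n l hl.1 (hε₀ l hl.1 hl.2)
      rw [hn] at this
      linarith
    have hMζ : Filter.Tendsto (fun l => M * ζ l) (nhdsWithin 0 (Set.Ioi 0)) (nhds 0) := by
      have := hζ0.const_mul M
      rwa [mul_zero] at this
    have : u (n + 1) ≤ 0 := ge_of_tendsto hMζ hev
    linarith [hu_nonneg (n + 1)]
  -- key inequality from the recurrence
  have hkey : ∀ n, ζstar (u n / M) ≤ ENNReal.ofReal ((u n - u (n + 1)) / M) := by
    intro n
    rw [hζstar]
    refine iSup₂_le fun l hl => ENNReal.ofReal_le_ofReal ?_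
    have h := hrec n l hl.1 hl.2
    have h2 : l * u n - M * ζ l ≤ u n - u (n + 1) := by linarith
    have h3 : (l * u n - M * ζ l) / M ≤ (u n - u (n + 1)) / M := by gcongr
    calc l * (u n / M) - ζ l = (l * u n - M * ζ l) / M := by field_simp
      _ ≤ _ := h3
  set g : ℝ → ℝ := fun v => ((ζstar v)⁻¹).toReal with hg
  have hg_nonneg : ∀ v, 0 ≤ g v := fun v => ENNReal.toReal_nonneg
  -- g antitone on positives
  have hg_anti : ∀ a b : ℝ, 0 < a → AntitoneOn g (Set.Icc a b) := by
    intro a b ha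
    intro x hx y hy hxy
    have hx0 : 0 < x := lt_of_lt_of_le ha hx.1
    have : (ζstar y)⁻¹ ≤ (ζstar x)⁻¹ := ENNReal.inv_le_inv.mpr (hmono x y hxy)
    refine ENNReal.toReal_mono ?_ this
    simp only [ne_eq, ENNReal.inv_eq_top]
    exact (hpos x hx0).ne'
  have hg_int : ∀ a b : ℝ, 0 < a → a ≤ b → IntervalIntegrable g MeasureTheory.volume a b := by
    intro a b ha hab
    refine AntitoneOn.intervalIntegrable ?_
    rw [Set.uIcc_of_le hab]
    exact hg_anti a b ha
  -- lower bound on integrals of g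
  have hg_lb : ∀ a b : ℝ, 0 < a → a ≤ b → ζstar b ≠ ⊤ →
      (b - a) * ((ζstar b).toReal)⁻¹ ≤ ∫ v in a..b, g v := by
    intro a b ha hab htop
    have hconst : ∀ x ∈ Set.Icc a b, ((ζstar b).toReal)⁻¹ ≤ g x := by
      intro x hx
      have hx0 : 0 < x := lt_of_lt_of_le ha hx.1
      have h1 : (ζstar b)⁻¹ ≤ (ζstar x)⁻¹ := ENNReal.inv_le_inv.mpr (hmono x b hx.2)
      have h2 : ((ζstar b)⁻¹).toReal ≤ ((ζstar x)⁻¹).toReal := by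
        refine ENNReal.toReal_mono ?_ h1
        simp only [ne_eq, ENNReal.inv_eq_top]
        exact (hpos x hx0).ne'
      rwa [ENNReal.toReal_inv] at h2
    calc (b - a) * ((ζstar b).toReal)⁻¹
        = ∫ _ in a..b, ((ζstar b).toReal)⁻¹ := by
          rw [intervalIntegral.integral_const, smul_eq_mul]
      _ ≤ ∫ v in a..b, g v := by
          refine intervalIntegral.integral_mono_on hab (by simp) (hg_int a b ha hab) hconst
  -- the main induction
  have main : ∀ n : ℕ, u n = 0 ∨ (0 < u n ∧ u n ≤ M ∧ (n : ℝ) ≤ F (u n / M)) := by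
    intro n
    induction n with
    | zero =>
      rcases eq_or_lt_of_le (hu_nonneg 0) with h | h
      · exact Or.inl h.symm
      · refine Or.inr ⟨h, hu0, ?_⟩
        rw [hF]
        simp only [Nat.cast_zero]
        refine intervalIntegral.integral_nonneg ?_ (fun x _ => hg_nonneg x)
        rw [div_le_one hM]; exact hu0
    | succ n ih =>
      rcases eq_or_lt_of_le (hu_nonneg (n + 1)) with h | h
      · exact Or.inl h.symm
      · refine Or.inr ?_
        have hun : 0 < u n := by
          rcases eq_or_lt_of_le (hu_nonneg n) with h0 | h0
          · exact absurd (hzero n h0.symm) h.ne'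
          · exact h0
        obtain ⟨-, hunM, hIH⟩ := ih.resolve_left hun.ne'
        set a := u (n + 1) / M with hadef
        set b := u n / M with hbdef
        have ha : 0 < a := div_pos h hM
        have hb1 : b ≤ 1 := by rw [hbdef, div_le_one hM]; exact hunM
        -- from the key inequality
        have hks : ζstar b ≤ ENNReal.ofReal (b - a) := by
          have := hkey n
          rw [sub_div] at this
          exact this
        have hζb_pos : 0 < ζstar b := hpos b (div_pos hun hM)
        have hba_pos : 0 < b - a := by
          have := lt_of_lt_of_le hζb_pos hks
          exact ENNReal.ofReal_pos.mp this
        have htop : ζstar b ≠ ⊤ :=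
          ne_top_of_le_ne_top ENNReal.ofReal_ne_top hks
        have hs_le : (ζstar b).toReal ≤ b - a := by
          have := ENNReal.toReal_mono ENNReal.ofReal_ne_top hks
          rwa [ENNReal.toReal_ofReal hba_pos.le] at this
        have hs_pos : 0 < (ζstar b).toReal := ENNReal.toReal_pos hζb_pos.ne' htop
        have hab : a ≤ b := by linarith
        have key1 : (1:ℝ) ≤ ∫ v in a..b, g v := by
          have h1 : (1:ℝ) ≤ (b - a) * ((ζstar b).toReal)⁻¹ := by
            rw [le_mul_inv_iff₀ hs_pos, one_mul]
            exact hs_le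
          exact h1.trans (hg_lb a b ha hab htop)
        have hsplit : F a = F b + ∫ v in a..b, g v := by
          rw [hF, hF]
          have := intervalIntegral.integral_add_adjacent_intervals
            (hg_int a b ha hab) (hg_int b 1 (ha.trans_le hab) hb1)
          rw [← this]; ring
        constructor
        · exact h
        constructor
        · calc u (n + 1) = M * a := by rw [hadef]; field_simp
            _ ≤ M * b := by
                have := mul_le_mul_of_nonneg_left hab hM.le
                linarith
            _ ≤ M * 1 := by nlinarith
            _ = M := mul_one M
        · push_cast
          rw [hadef] at hsplit ⊢
          rw [hsplit]
          linarith
  -- conclude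
  intro n
  obtain ⟨⟨hFinv_pos, hFinv_le1⟩, hFinvF⟩ := hFinv n (Nat.cast_nonneg n)
  rcases main n with h | ⟨hun, hunM, hIH⟩
  · rw [h]; positivity
  · set b := u n / M with hbdef
    have hb0 : 0 < b := div_pos hun hM
    have hb1 : b ≤ 1 := by rw [hbdef, div_le_one hM]; exact hunM
    -- ζstar b is finite and positive
    have hks : ζstar b ≤ ENNReal.ofReal (b - u (n+1) / M) := by
      have := hkey n
      rw [sub_div] at this
      exact this
    have htop : ζstar b ≠ ⊤ := ne_top_of_le_ne_top ENNReal.ofReal_ne_top hks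
    have hs_pos : 0 < (ζstar b).toReal := ENNReal.toReal_pos (hpos b hb0).ne' htop
    -- show b ≤ Finv n
    have hble : b ≤ Finv n := by
      by_contra hcon
      push_neg at hcon
      have hsplit : F (Finv n) = F b + ∫ v in (Finv n)..b, g v := by
        rw [hF, hF]
        have := intervalIntegral.integral_add_adjacent_intervals
          (hg_int (Finv n) b hFinv_pos hcon.le) (hg_int b 1 hb0 hb1)
        rw [← this]; ring
      have hlb := hg_lb (Finv n) b hFinv_pos hcon.le htop
      have hpos' : 0 < (b - Finv n) * ((ζstar b).toReal)⁻¹ := by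
        apply mul_pos (by linarith) (inv_pos.mpr hs_pos)
      have : (n:ℝ) < F (Finv n) := by
        rw [hsplit]
        have : F b ≥ (n:ℝ) := hIH
        nlinarith
      rw [hFinvF] at this
      exact lt_irrefl _ this
    calc u n = M * b := by rw [hbdef]; field_simp
      _ ≤ M * Finv n := mul_le_mul_of_nonneg_left hble hM.le
end

section
/- Let g : (0, ∞) → (0, ∞) be positive and nondecreasing with lim_{s→0} g(s)/s = 0, and set F(λ) = ∫_λ^1 ds/g(s) for 0 < λ ≤ 1. Then F is strictly decreasing with lim_{λ→0} F(λ) = +∞, F^{-1} : [0, ∞) → (0, 1] is well defined, and for every k > 0 there exists a constant C > 1 depending only on k and g such that F^{-1}(t − k) ≤ C·F^{-1}(t) for all t ≥ k. -/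
/-- Lemma 4.12: for `g` positive nondecreasing with `g(s)/s → 0` as `s → 0`, the
function `F(λ) = ∫_λ^1 ds/g(s)` is strictly decreasing, tends to `+∞` at `0`,
admits an inverse `F⁻¹ : [0,∞) → (0,1]`, and for every `k > 0` there is `C > 1`
with `F⁻¹(t - k) ≤ C F⁻¹(t)` for all `t ≥ k`. -/
theorem inverse_rate_comparison
    (g : ℝ → ℝ) (hg_pos : ∀ s, 0 < s → 0 < g s)
    (hg_mono : MonotoneOn g (Set.Ioi 0))
    (hg_lim : Filter.Tendsto (fun s => g s / s) (nhdsWithin 0 (Set.Ioi 0)) (nhds 0))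
    (F : ℝ → ℝ) (hF : ∀ l, F l = ∫ s in l..1, 1 / g s) :
    StrictAntiOn F (Set.Ioc 0 1) ∧
    Filter.Tendsto F (nhdsWithin 0 (Set.Ioi 0)) Filter.atTop ∧
    (∀ t, 0 ≤ t → ∃! l, l ∈ Set.Ioc (0:ℝ) 1 ∧ F l = t) ∧
    (∀ k, 0 < k → ∃ C > (1:ℝ), ∀ t, k ≤ t →
      ∀ l l', l ∈ Set.Ioc (0:ℝ) 1 → l' ∈ Set.Ioc (0:ℝ) 1 →
        F l = t - k → F l' = t → l ≤ C * l') := by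
  -- antitonicity of 1/g on positive intervals
  have hanti : ∀ a b : ℝ, 0 < a → 0 < b →
      AntitoneOn (fun s => 1 / g s) (Set.uIcc a b) := by
    intro a b ha hb x hx y hy hxy
    have hxpos : 0 < x := lt_of_lt_of_le (lt_min ha hb) hx.1
    have hypos : 0 < y := lt_of_lt_of_le (lt_min ha hb) hy.1
    exact one_div_le_one_div_of_le (hg_pos x hxpos)
      (hg_mono (Set.mem_Ioi.mpr hxpos) (Set.mem_Ioi.mpr hypos) hxy)
  have hint : ∀ a b : ℝ, 0 < a → 0 < b →
      IntervalIntegrable (fun s => 1 / g s) MeasureTheory.volume a b := by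
    intro a b ha hb
    exact (hanti a b ha hb).intervalIntegrable
  -- F a - F b = ∫_a^b 1/g
  have hsub : ∀ a b : ℝ, 0 < a → 0 < b →
      F a - F b = ∫ s in a..b, 1 / g s := by
    intro a b ha hb
    have := intervalIntegral.integral_add_adjacent_intervals
      (hint a b ha hb) (hint b 1 hb one_pos)
    rw [hF a, hF b]
    linarith
  -- positivity of the integral
  have hposint : ∀ a b : ℝ, 0 < a → a < b → 0 < ∫ s in a..b, 1 / g s := by
    intro a b ha hab
    refine intervalIntegral.intervalIntegral_pos_of_pos_on
      (hint a b ha (ha.trans hab)) (fun x hx => ?_) hab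
    exact one_div_pos.mpr (hg_pos x (ha.trans hx.1))
  -- strict antitonicity
  have hFanti : StrictAntiOn F (Set.Ioc 0 1) := by
    intro a ha b hb hab
    have h1 := hsub a b ha.1 hb.1
    have h2 := hposint a b ha.1 hab
    linarith
  -- smallness of g near 0
  have hδ : ∀ c : ℝ, 0 < c → ∃ δ : ℝ, 0 < δ ∧ δ ≤ 1 ∧
      ∀ s, 0 < s → s ≤ δ → g s ≤ c * s := by
    intro c hc
    have hev : ∀ᶠ s in nhdsWithin 0 (Set.Ioi 0), g s / s < c :=
      hg_lim.eventually_lt_const hc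
    rw [eventually_nhdsWithin_iff, Metric.eventually_nhds_iff] at hev
    obtain ⟨ε, hε, hball⟩ := hev
    refine ⟨min (ε / 2) 1, lt_min (by linarith) one_pos, min_le_right _ _,
      fun s hs hsle => ?_⟩
    have hlt : g s / s < c := by
      apply hball (y := s) _ hs
      rw [Real.dist_eq, sub_zero, abs_of_pos hs]
      exact lt_of_le_of_lt (hsle.trans (min_le_left _ _)) (by linarith)
    calc g s = (g s / s) * s := by field_simp
    _ ≤ c * s := mul_le_mul_of_nonneg_right hlt.le hs.le
  -- logarithmic lower bound for the integral
  have hlog : ∀ c δ : ℝ, 0 < c → (∀ s, 0 < s → s ≤ δ → g s ≤ c * s) →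
      ∀ a b : ℝ, 0 < a → a ≤ b → b ≤ δ →
      (1 / c) * (Real.log b - Real.log a) ≤ ∫ s in a..b, 1 / g s := by
    intro c δ hc hgδ a b ha hab hbδ
    have hbpos : 0 < b := ha.trans_le hab
    have hcont : ContinuousOn (fun s : ℝ => 1 / (c * s)) (Set.uIcc a b) := by
      apply ContinuousOn.div continuousOn_const
      · exact (continuousOn_const.mul continuousOn_id)
      · intro x hx
        have : 0 < x := lt_of_lt_of_le (lt_min ha hbpos) hx.1
        positivity
    have hint2 : IntervalIntegrable (fun s : ℝ => 1 / (c * s))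
        MeasureTheory.volume a b := hcont.intervalIntegrable
    have hmono : ∫ s in a..b, 1 / (c * s) ≤ ∫ s in a..b, 1 / g s := by
      apply intervalIntegral.integral_mono_on hab hint2
        (hint a b ha hbpos)
      intro x hx
      have hxpos : 0 < x := lt_of_lt_of_le ha hx.1
      have hgx : 0 < g x := hg_pos x hxpos
      exact one_div_le_one_div_of_le hgx (hgδ x hxpos (hx.2.trans hbδ))
    have hval : ∫ s in a..b, 1 / (c * s) = (1 / c) * (Real.log b - Real.log a) := by
      have h0 : (0 : ℝ) ∉ Set.uIcc a b := by
        simp only [Set.mem_uIcc]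
        push_neg
        constructor <;> intro h <;> linarith [lt_min ha hbpos]
      have : ∀ s : ℝ, 1 / (c * s) = c⁻¹ * (1 / s) := by
        intro s; rw [one_div, mul_inv, one_div, inv_mul_eq_div, div_eq_mul_inv]
      simp_rw [this]
      rw [intervalIntegral.integral_const_mul, integral_one_div h0,
        Real.log_div (ne_of_gt hbpos) (ne_of_gt ha), one_div]
    linarith
  -- tendsto atTop
  have hFtop : Filter.Tendsto F (nhdsWithin 0 (Set.Ioi 0)) Filter.atTop := by
    obtain ⟨δ, hδpos, hδ1, hgδ⟩ := hδ 1 one_pos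
    have hneg : Filter.Tendsto (fun l : ℝ => -Real.log l)
        (nhdsWithin 0 (Set.Ioi 0)) Filter.atTop :=
      Filter.tendsto_neg_atBot_atTop.comp Real.tendsto_log_nhdsGT_zero
    have hbound : Filter.Tendsto (fun l : ℝ => (F δ + Real.log δ) + -Real.log l)
        (nhdsWithin 0 (Set.Ioi 0)) Filter.atTop :=
      Filter.tendsto_atTop_add_const_left _ _ hneg
    apply Filter.tendsto_atTop_mono' _ _ hbound
    have hmem : Set.Ioo (0:ℝ) δ ∈ nhdsWithin 0 (Set.Ioi 0) := by
      apply mem_nhdsWithin.mpr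
      exact ⟨Set.Iio δ, isOpen_Iio, hδpos, fun x hx => ⟨hx.2, hx.1⟩⟩
    filter_upwards [hmem] with l hl
    have h1 := hlog 1 δ one_pos hgδ l δ hl.1 hl.2.le le_rfl
    have h2 := hsub l δ hl.1 hδpos
    simp only [one_div_one, one_mul] at h1
    linarith
  -- F 1 = 0
  have hF1 : F 1 = 0 := by rw [hF 1, intervalIntegral.integral_same]
  -- existence and uniqueness of the inverse
  have hinv : ∀ t, 0 ≤ t → ∃! l, l ∈ Set.Ioc (0:ℝ) 1 ∧ F l = t := by
    intro t ht
    -- find a small a with F a ≥ t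
    have hev : ∀ᶠ a in nhdsWithin 0 (Set.Ioi 0), t ≤ F a :=
      hFtop.eventually_ge_atTop t
    have hmem : Set.Ioo (0:ℝ) 1 ∈ nhdsWithin 0 (Set.Ioi 0) := by
      apply mem_nhdsWithin.mpr
      exact ⟨Set.Iio 1, isOpen_Iio, Set.mem_Iio.mpr one_pos, fun x hx => ⟨hx.2, hx.1⟩⟩
    obtain ⟨a, hta, ha⟩ := (hev.and (Filter.eventually_mem_set.mpr hmem)).exists
    -- continuity of F on [a, 1]
    have hintOn : MeasureTheory.IntegrableOn (fun s => 1 / g s)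
        (Set.uIcc a 1) MeasureTheory.volume := by
      have h := (hint a 1 ha.1 one_pos)
      rw [intervalIntegrable_iff_integrableOn_Icc_of_le ha.2.le] at h
      rwa [Set.uIcc_of_le ha.2.le]
    have hcont : ContinuousOn F (Set.Icc a 1) := by
      have h := intervalIntegral.continuousOn_primitive_interval_left hintOn
      rw [Set.uIcc_of_le ha.2.le] at h
      apply h.congr
      intro x _
      exact hF x
    have hsurj := intermediate_value_Icc' ha.2.le hcont
    have htmem : t ∈ Set.Icc (F 1) (F a) := ⟨hF1 ▸ ht, hta⟩
    obtain ⟨l, hl, hlt⟩ := hsurj htmem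
    refine ⟨l, ⟨⟨ha.1.trans_le hl.1, hl.2⟩, hlt⟩, ?_⟩
    rintro l' ⟨hl', hl't⟩
    exact hFanti.injOn hl' ⟨ha.1.trans_le hl.1, hl.2⟩ (hl't.trans hlt.symm)
  refine ⟨hFanti, hFtop, hinv, ?_⟩
  -- the comparison estimate
  intro k hk
  obtain ⟨δ, hδpos, hδ1, hgδ⟩ := hδ (1 / (2 * k)) (by positivity)
  -- F δ ≥ 0
  have hFδ : 0 ≤ F δ := by
    rcases eq_or_lt_of_le hδ1 with h | h
    · rw [h, hF1]
    · linarith [hposint δ 1 hδpos h, hsub δ 1 hδpos one_pos, hF1]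
  obtain ⟨m, ⟨hm, hFm⟩, _⟩ := hinv (F δ + k) (by linarith)
  refine ⟨max 2 (1 / m), lt_of_lt_of_le one_lt_two (le_max_left _ _), ?_⟩
  intro t hkt l l' hl hl' hFl hFl'
  have hk' : F l' - F l = k := by rw [hFl, hFl']; ring
  -- l' ≤ l
  have hl'l : l' ≤ l := by
    by_contra h
    push_neg at h
    have := hFanti hl hl' h
    linarith
  rcases le_or_gt l δ with hcase | hcase
  · -- small case: l ≤ δ, use the logarithmic estimate
    have hint_eq : ∫ s in l'..l, 1 / g s = k := by
      have := hsub l' l hl'.1 hl.1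
      linarith
    have hlb := hlog (1 / (2 * k)) δ (by positivity) hgδ l' l hl'.1 hl'l hcase
    rw [hint_eq] at hlb
    have h2k : (1 : ℝ) / (1 / (2 * k)) = 2 * k := by field_simp
    rw [h2k] at hlb
    have hloglt : Real.log l - Real.log l' ≤ 1 / 2 := by nlinarith
    have hlog2 : Real.log l ≤ Real.log (2 * l') := by
      rw [Real.log_mul two_ne_zero (ne_of_gt hl'.1)]
      linarith [Real.log_two_gt_d9]
    have hle : l ≤ 2 * l' :=
      (Real.log_le_log_iff hl.1 (by linarith [hl'.1])).mp hlog2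
    calc l ≤ 2 * l' := hle
    _ ≤ max 2 (1 / m) * l' :=
        mul_le_mul_of_nonneg_right (le_max_left _ _) hl'.1.le
  · -- large case: δ < l
    have hFlδ : F l ≤ F δ := (hFanti ⟨hδpos, hδ1⟩ hl hcase).le
    have hFl'm : F l' ≤ F m := by rw [hFm]; linarith
    have hml' : m ≤ l' := by
      by_contra h
      push_neg at h
      have := hFanti hl' hm h
      linarith
    calc l ≤ 1 := hl.2
    _ = (1 / m) * m := (one_div_mul_cancel (ne_of_gt hm.1)).symm
    _ ≤ (1 / m) * l' := by
        apply mul_le_mul_of_nonneg_left hml'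
        have := hm.1
        positivity
    _ ≤ max 2 (1 / m) * l' :=
        mul_le_mul_of_nonneg_right (le_max_right _ _) hl'.1.le
end

section
/- Let (S_t)_{t≥0} be a stochastic semigroup such that S_T satisfies the Doeblin condition for some T > 0 and α ∈ (0,1). Then the semigroup has a unique invariant probability measure μ*, and for every zero-mean finite signed measure ν and every t ≥ 0, ‖S_t ν‖_TV ≤ (1/(1−α)) e^{−λt} ‖ν‖_TV, where λ = −log(1−α)/T > 0. -/
open MeasureTheory

open Set Filter

namespace DT
variable {Ω : Type*} [MeasurableSpace Ω]

lemma tvNorm_nonneg (σ : SignedMeasure Ω) : 0 ≤ tvNorm σ := ENNReal.toReal_nonneg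

lemma tvNorm_zero_prm : tvNorm (0 : SignedMeasure Ω) = 0 := by
  simp [tvNorm, SignedMeasure.totalVariation_zero]

lemma tvNorm_eq_parts_prm (σ : SignedMeasure Ω) :
    tvNorm σ = (σ.toJordanDecomposition.posPart Set.univ).toReal
      + (σ.toJordanDecomposition.negPart Set.univ).toReal := by
  rw [tvNorm, SignedMeasure.totalVariation, Measure.add_apply,
    ENNReal.toReal_add (measure_ne_top _ _) (measure_ne_top _ _)]

lemma apply_nonneg_of_nonneg {σ : SignedMeasure Ω} (h : 0 ≤ σ) {A : Set Ω}
    (hA : MeasurableSet A) : 0 ≤ σ A := by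
  have := (VectorMeasure.le_iff.mp h) A hA
  simpa using this

lemma apply_le_univ_of_nonneg {σ : SignedMeasure Ω} (h : 0 ≤ σ) {A : Set Ω}
    (hA : MeasurableSet A) : σ A ≤ σ Set.univ := by
  have hadd := VectorMeasure.of_add_of_diff (v := σ) hA MeasurableSet.univ (Set.subset_univ A)
  have h2 : 0 ≤ σ (Set.univ \ A) :=
    apply_nonneg_of_nonneg h (MeasurableSet.univ.diff hA)
  linarith [hadd]

lemma tvNorm_sub_le_prm (X Y : SignedMeasure Ω) (hX : 0 ≤ X) (hY : 0 ≤ Y) :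
    tvNorm (X - Y) ≤ X Set.univ + Y Set.univ := by
  obtain ⟨i, hi₁, hi₂, hi₃, hp, hn⟩ := (X - Y).toJordanDecomposition_spec
  rw [tvNorm_eq_parts_prm, hp, hn,
    SignedMeasure.toMeasureOfZeroLE_apply _ hi₂ hi₁ MeasurableSet.univ,
    SignedMeasure.toMeasureOfLEZero_apply _ hi₃ hi₁.compl MeasurableSet.univ]
  simp only [Set.inter_univ, ENNReal.coe_toReal, NNReal.coe_mk]
  have h1 : (X - Y) i ≤ X Set.univ := by
    rw [VectorMeasure.sub_apply]
    have := apply_nonneg_of_nonneg hY hi₁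
    have := apply_le_univ_of_nonneg hX hi₁
    linarith
  have h2 : -(X - Y) iᶜ ≤ Y Set.univ := by
    rw [VectorMeasure.sub_apply]
    have := apply_nonneg_of_nonneg hX hi₁.compl
    have := apply_le_univ_of_nonneg hY hi₁.compl
    linarith
  linarith

lemma tvNorm_le_of_bound (σ : SignedMeasure Ω) (c : ℝ)
    (h : ∀ A, MeasurableSet A → |σ A| ≤ c) : tvNorm σ ≤ 2 * c := by
  obtain ⟨i, hi₁, hi₂, hi₃, hp, hn⟩ := σ.toJordanDecomposition_spec
  rw [tvNorm_eq_parts_prm, hp, hn,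
    SignedMeasure.toMeasureOfZeroLE_apply _ hi₂ hi₁ MeasurableSet.univ,
    SignedMeasure.toMeasureOfLEZero_apply _ hi₃ hi₁.compl MeasurableSet.univ]
  simp only [Set.inter_univ, ENNReal.coe_toReal, NNReal.coe_mk]
  have h1 := h i hi₁
  have h2 := h iᶜ hi₁.compl
  have := abs_le.mp h1
  have := abs_le.mp h2
  linarith [this.1, this.2]

lemma abs_apply_le_tvNorm (σ : SignedMeasure Ω) {A : Set Ω} (hA : MeasurableSet A) :
    |σ A| ≤ tvNorm σ := by
  conv_lhs => rw [← σ.toSignedMeasure_toJordanDecomposition]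
  rw [JordanDecomposition.toSignedMeasure, VectorMeasure.sub_apply,
    Measure.toSignedMeasure_apply_measurable hA, Measure.toSignedMeasure_apply_measurable hA,
    tvNorm_eq_parts_prm, measureReal_def, measureReal_def]
  have hpa : (σ.toJordanDecomposition.posPart A).toReal
      ≤ (σ.toJordanDecomposition.posPart Set.univ).toReal :=
    ENNReal.toReal_mono (measure_ne_top _ _) (measure_mono (Set.subset_univ A))
  have hna : (σ.toJordanDecomposition.negPart A).toReal
      ≤ (σ.toJordanDecomposition.negPart Set.univ).toReal :=
    ENNReal.toReal_mono (measure_ne_top _ _) (measure_mono (Set.subset_univ A))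
  rw [abs_sub_le_iff]
  constructor <;> [skip; skip] <;>
    [ (have := ENNReal.toReal_nonneg (a := σ.toJordanDecomposition.negPart A); linarith);
      (have := ENNReal.toReal_nonneg (a := σ.toJordanDecomposition.posPart A); linarith)]

lemma eq_zero_of_tvNorm_eq_zero {σ : SignedMeasure Ω} (h : tvNorm σ = 0) : σ = 0 := by
  ext A hA
  have := abs_apply_le_tvNorm σ hA
  rw [h] at this
  simpa using abs_nonpos_iff.mp this

lemma smul_nonneg_prm {σ : SignedMeasure Ω} (h : 0 ≤ σ) {r : ℝ} (hr : 0 ≤ r) : 0 ≤ r • σ := by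
  rw [VectorMeasure.le_iff]
  intro A hA
  rw [VectorMeasure.smul_apply]
  simpa using mul_nonneg hr (apply_nonneg_of_nonneg h hA)


lemma tvNorm_neg (σ : SignedMeasure Ω) : tvNorm (-σ) = tvNorm σ := by
  simp [tvNorm, SignedMeasure.totalVariation_neg]

lemma norm_smul_prob (p : Measure Ω) [IsFiniteMeasure p] (hc0 : p Set.univ ≠ 0) :
    ∃ (p' : Measure Ω) (_ : IsProbabilityMeasure p'),
      p.toSignedMeasure = (p Set.univ).toReal • p'.toSignedMeasure := by
  set c := p Set.univ with hc
  have hctop : c ≠ ⊤ := measure_ne_top _ _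
  refine ⟨c⁻¹ • p, ⟨by rw [Measure.smul_apply, smul_eq_mul, ← hc,
    ENNReal.inv_mul_cancel hc0 hctop]⟩, ?_⟩
  haveI : IsProbabilityMeasure (c⁻¹ • p) := ⟨by rw [Measure.smul_apply, smul_eq_mul, ← hc,
    ENNReal.inv_mul_cancel hc0 hctop]⟩
  ext A hA
  rw [Measure.toSignedMeasure_apply_measurable hA, VectorMeasure.smul_apply,
    Measure.toSignedMeasure_apply_measurable hA, measureReal_def, measureReal_def,
    Measure.smul_apply, smul_eq_mul, smul_eq_mul, ENNReal.toReal_mul, ENNReal.toReal_inv]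
  have hcr : c.toReal ≠ 0 := by
    simp [ENNReal.toReal_ne_zero, hc0, hctop]
  field_simp

lemma contraction (S : SignedMeasure Ω →ₗ[ℝ] SignedMeasure Ω)
    (hmass : ∀ μ : SignedMeasure Ω, S μ Set.univ = μ Set.univ)
    (α : ℝ) (hα0 : 0 < α) (hα1 : α < 1)
    (η : Measure Ω) [IsProbabilityMeasure η]
    (hD : ∀ (μ : Measure Ω) [IsProbabilityMeasure μ],
      α • η.toSignedMeasure ≤ S μ.toSignedMeasure)
    (ν : SignedMeasure Ω) (hν : ν Set.univ = 0) :
    tvNorm (S ν) ≤ (1 - α) * tvNorm ν := by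
  classical
  set p := ν.toJordanDecomposition.posPart with hpdef
  set q := ν.toJordanDecomposition.negPart with hqdef
  have hνpq : ν = p.toSignedMeasure - q.toSignedMeasure := by
    conv_lhs => rw [← ν.toSignedMeasure_toJordanDecomposition]
    rfl
  have hmasseq : q Set.univ = p Set.univ := by
    have h1 : ν Set.univ = (p Set.univ).toReal - (q Set.univ).toReal := by
      rw [hνpq, VectorMeasure.sub_apply, Measure.toSignedMeasure_apply_measurable .univ,
        Measure.toSignedMeasure_apply_measurable .univ, measureReal_def, measureReal_def]
    rw [hν] at h1
    exact (ENNReal.toReal_eq_toReal_iff' (measure_ne_top _ _) (measure_ne_top _ _)).mp (by linarith)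
  have htvν : tvNorm ν = (p Set.univ).toReal + (q Set.univ).toReal := tvNorm_eq_parts_prm ν
  by_cases hc0 : p Set.univ = 0
  · -- ν = 0
    have hq0 : q Set.univ = 0 := by rw [hmasseq, hc0]
    have htv0 : tvNorm ν = 0 := by rw [htvν, hc0, hq0]; simp
    have hν0 : ν = 0 := eq_zero_of_tvNorm_eq_zero htv0
    rw [hν0, map_zero, tvNorm_zero_prm]
    simp
  · obtain ⟨p', hp'prob, hpts⟩ := norm_smul_prob p hc0
    have hq0 : q Set.univ ≠ 0 := by rw [hmasseq]; exact hc0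
    obtain ⟨q', hq'prob, hqts⟩ := norm_smul_prob q hq0
    set c := (p Set.univ).toReal with hcdef
    have hcq : (q Set.univ).toReal = c := by rw [hmasseq]
    have hc_nonneg : 0 ≤ c := ENNReal.toReal_nonneg
    haveI := hp'prob; haveI := hq'prob
    set A := S p'.toSignedMeasure - α • η.toSignedMeasure with hAdef
    set B := S q'.toSignedMeasure - α • η.toSignedMeasure with hBdef
    have hA0 : 0 ≤ A := sub_nonneg.mpr (hD p')
    have hB0 : 0 ≤ B := sub_nonneg.mpr (hD q')
    have hSν : S ν = c • A - c • B := by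
      rw [hνpq, map_sub, hpts, hqts, hcq, _root_.map_smul, _root_.map_smul, hAdef, hBdef]
      module
    have hAuniv : A Set.univ = 1 - α := by
      rw [hAdef, VectorMeasure.sub_apply, hmass, VectorMeasure.smul_apply,
        Measure.toSignedMeasure_apply_measurable .univ,
        Measure.toSignedMeasure_apply_measurable .univ]
      simp [measure_univ]
    have hBuniv : B Set.univ = 1 - α := by
      rw [hBdef, VectorMeasure.sub_apply, hmass, VectorMeasure.smul_apply,
        Measure.toSignedMeasure_apply_measurable .univ,
        Measure.toSignedMeasure_apply_measurable .univ]
      simp [measure_univ]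
    have := tvNorm_sub_le_prm (c • A) (c • B) (smul_nonneg_prm hA0 hc_nonneg)
      (smul_nonneg_prm hB0 hc_nonneg)
    rw [← hSν] at this
    rw [VectorMeasure.smul_apply, VectorMeasure.smul_apply, hAuniv, hBuniv] at this
    rw [htvν, hcq]
    calc tvNorm (S ν) ≤ c * (1 - α) + c * (1 - α) := by simpa using this
      _ = (1 - α) * (c + c) := by ring


lemma nonexpansive (S : SignedMeasure Ω →ₗ[ℝ] SignedMeasure Ω)
    (hpos : ∀ μ : SignedMeasure Ω, 0 ≤ μ → 0 ≤ S μ)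
    (hmass : ∀ μ : SignedMeasure Ω, S μ Set.univ = μ Set.univ)
    (ν : SignedMeasure Ω) : tvNorm (S ν) ≤ tvNorm ν := by
  set p := ν.toJordanDecomposition.posPart with hpdef
  set q := ν.toJordanDecomposition.negPart with hqdef
  have hνpq : ν = p.toSignedMeasure - q.toSignedMeasure := by
    conv_lhs => rw [← ν.toSignedMeasure_toJordanDecomposition]
    rfl
  have h1 : S ν = S p.toSignedMeasure - S q.toSignedMeasure := by
    conv_lhs => rw [hνpq]
    rw [map_sub]
  have h2 := tvNorm_sub_le_prm (S p.toSignedMeasure) (S q.toSignedMeasure)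
    (hpos _ (Measure.zero_le_toSignedMeasure p)) (hpos _ (Measure.zero_le_toSignedMeasure q))
  rw [← h1, hmass, hmass, Measure.toSignedMeasure_apply_measurable .univ,
    Measure.toSignedMeasure_apply_measurable .univ] at h2
  rw [tvNorm_eq_parts_prm ν]
  exact h2


end DT

set_option maxHeartbeats 1000000 in
/-- Semigroup version of Doeblin's theorem (Theorem 5.1): if `S_T` satisfies the
Doeblin condition, then the semigroup has a unique invariant probability measure
and zero-mean measures decay exponentially in total variation, with rate
`λ = -log(1-α)/T` and prefactor `1/(1-α)`. -/
theorem semigroup_doeblin {Ω : Type*} [MeasurableSpace Ω]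
    (S : ℝ → (SignedMeasure Ω →ₗ[ℝ] SignedMeasure Ω))
    (hstoch : ∀ t, 0 ≤ t → IsStochastic (S t))
    (hid : S 0 = LinearMap.id)
    (hsg : ∀ s t, 0 ≤ s → 0 ≤ t → ∀ μ : SignedMeasure Ω, S t (S s μ) = S (t + s) μ)
    (T α : ℝ) (hT : 0 < T) (hα0 : 0 < α) (hα1 : α < 1)
    (η : Measure Ω) [IsProbabilityMeasure η]
    (hDoeblin : ∀ (μ : Measure Ω) [IsProbabilityMeasure μ],
      α • η.toSignedMeasure ≤ S T μ.toSignedMeasure) :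
    ∃ (μstar : Measure Ω) (hp : IsProbabilityMeasure μstar),
      (∀ t, 0 ≤ t → S t (probToSigned μstar hp) = probToSigned μstar hp) ∧
      (∀ (μ' : Measure Ω) (hp' : IsProbabilityMeasure μ'),
        (∀ t, 0 ≤ t → S t (probToSigned μ' hp') = probToSigned μ' hp') → μ' = μstar) ∧
      (∀ ν : SignedMeasure Ω, ν Set.univ = 0 → ∀ t, 0 ≤ t →
        tvNorm (S t ν) ≤
          (1 / (1 - α)) * Real.exp (-(-Real.log (1 - α) / T) * t) * tvNorm ν) := by
  classical
  have h1α : (0:ℝ) < 1 - α := by linarith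
  have h1α1 : (1:ℝ) - α < 1 := by linarith
  set P : SignedMeasure Ω →ₗ[ℝ] SignedMeasure Ω := S T with hPdef
  obtain ⟨hPpos, hPmass⟩ := hstoch T hT.le
  have hcontr : ∀ ν : SignedMeasure Ω, ν Set.univ = 0 → tvNorm (P ν) ≤ (1-α) * tvNorm ν :=
    fun ν hν => DT.contraction P hPmass α hα0 hα1 η hDoeblin ν hν
  have hpow_apply : ∀ (n : ℕ) (σ : SignedMeasure Ω), (P^(n+1)) σ = (P^n) (P σ) := by
    intro n σ; rw [pow_succ]; rfl
  have hpow_apply' : ∀ (n : ℕ) (σ : SignedMeasure Ω), (P^(n+1)) σ = P ((P^n) σ) := by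
    intro n σ; rw [pow_succ']; rfl
  have hpow_mass : ∀ (n : ℕ) (σ : SignedMeasure Ω), ((P^n) σ) Set.univ = σ Set.univ := by
    intro n
    induction n with
    | zero => intro σ; rw [pow_zero]; rfl
    | succ n ih => intro σ; rw [hpow_apply, ih, hPmass]
  have hpow_pos : ∀ (n : ℕ) (σ : SignedMeasure Ω), 0 ≤ σ → 0 ≤ (P^n) σ := by
    intro n
    induction n with
    | zero => intro σ hσ; rw [pow_zero]; exact hσ
    | succ n ih => intro σ hσ; rw [hpow_apply]; exact ih _ (hPpos _ hσ)
  have hiter : ∀ (n : ℕ) (ν : SignedMeasure Ω), ν Set.univ = 0 →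
      tvNorm ((P^n) ν) ≤ (1-α)^n * tvNorm ν := by
    intro n
    induction n with
    | zero => intro ν _; rw [pow_zero]; simp [Module.End.one_apply]
    | succ n ih =>
      intro ν hν
      rw [hpow_apply]
      calc tvNorm ((P^n) (P ν)) ≤ (1-α)^n * tvNorm (P ν) :=
            ih _ (by rw [hPmass]; exact hν)
        _ ≤ (1-α)^n * ((1-α) * tvNorm ν) :=
            mul_le_mul_of_nonneg_left (hcontr ν hν) (pow_nonneg h1α.le n)
        _ = (1-α)^(n+1) * tvNorm ν := by ring
  have hnonexp : ∀ t, 0 ≤ t → ∀ ν, tvNorm (S t ν) ≤ tvNorm ν := fun t ht ν =>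
    DT.nonexpansive (S t) (hstoch t ht).1 (hstoch t ht).2 ν
  have hSnT : ∀ (n : ℕ) (σ : SignedMeasure Ω), S ((n:ℝ)*T) σ = (P^n) σ := by
    intro n
    induction n with
    | zero =>
      intro σ
      rw [Nat.cast_zero, zero_mul, hid, pow_zero]
      rfl
    | succ n ih =>
      intro σ
      have h2 : ((n+1:ℕ):ℝ)*T = T + (n:ℝ)*T := by push_cast; ring
      rw [h2, ← hsg ((n:ℝ)*T) T (by positivity) hT.le σ, ih, hpow_apply']
  -- the iteration sequence started at η
  set σseq : ℕ → SignedMeasure Ω := fun n => (P^n) η.toSignedMeasure with hσdef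
  have hσ0 : ∀ n, 0 ≤ σseq n := fun n => hpow_pos n _ (Measure.zero_le_toSignedMeasure η)
  have hσu : ∀ n, σseq n Set.univ = 1 := by
    intro n
    show ((P^n) η.toSignedMeasure) Set.univ = 1
    rw [hpow_mass, Measure.toSignedMeasure_apply_measurable MeasurableSet.univ]
    simp
  have hstep : ∀ n, σseq (n+1) = P (σseq n) := fun n => hpow_apply' n _
  have hdist : ∀ n m, n ≤ m → tvNorm (σseq m - σseq n) ≤ 2 * (1-α)^n := by
    intro n m hnm
    have hm : σseq m = (P^n) (σseq (m - n)) := by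
      show (P^m) η.toSignedMeasure = (P^n) ((P^(m-n)) η.toSignedMeasure)
      rw [← Module.End.mul_apply, ← pow_add, Nat.add_sub_cancel' hnm]
    have hdiff : σseq m - σseq n = (P^n) (σseq (m-n) - η.toSignedMeasure) := by
      rw [map_sub, ← hm]
    have hzm : (σseq (m-n) - η.toSignedMeasure) Set.univ = 0 := by
      rw [VectorMeasure.sub_apply, hσu,
        Measure.toSignedMeasure_apply_measurable MeasurableSet.univ]
      simp
    have htv2 : tvNorm (σseq (m-n) - η.toSignedMeasure) ≤ 2 := by
      have h := DT.tvNorm_sub_le_prm (σseq (m-n)) η.toSignedMeasure (hσ0 _)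
        (Measure.zero_le_toSignedMeasure η)
      rw [hσu, Measure.toSignedMeasure_apply_measurable MeasurableSet.univ,
        measureReal_def, measure_univ, ENNReal.toReal_one] at h
      linarith [h]
    calc tvNorm (σseq m - σseq n) = tvNorm ((P^n) (σseq (m-n) - η.toSignedMeasure)) := by
          rw [hdiff]
      _ ≤ (1-α)^n * tvNorm (σseq (m-n) - η.toSignedMeasure) := hiter n _ hzm
      _ ≤ (1-α)^n * 2 := mul_le_mul_of_nonneg_left htv2 (pow_nonneg h1α.le n)
      _ = 2 * (1-α)^n := by ring
  -- pointwise limits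
  have hcau : ∀ A : Set Ω, MeasurableSet A → CauchySeq (fun n => σseq n A) := by
    intro A hA
    apply cauchySeq_of_le_geometric (1-α) 2 h1α1
    intro n
    rw [Real.dist_eq, abs_sub_comm]
    have h := DT.abs_apply_le_tvNorm (σseq (n+1) - σseq n) hA
    rw [VectorMeasure.sub_apply] at h
    exact h.trans (hdist n (n+1) (Nat.le_succ n))
  set F : Set Ω → ℝ := fun A => limUnder atTop (fun n => σseq n A) with hFdef
  have hFt : ∀ A : Set Ω, MeasurableSet A → Tendsto (fun n => σseq n A) atTop (nhds (F A)) :=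
    fun A hA => (hcau A hA).tendsto_limUnder
  have hFnn : ∀ A : Set Ω, MeasurableSet A → 0 ≤ F A := fun A hA =>
    ge_of_tendsto (hFt A hA) (Eventually.of_forall fun n =>
      DT.apply_nonneg_of_nonneg (hσ0 n) hA)
  have hFuniv : F Set.univ = 1 := by
    refine tendsto_nhds_unique (hFt Set.univ MeasurableSet.univ) ?_
    simp only [hσu]
    exact tendsto_const_nhds
  have hFempty : F ∅ = 0 := by
    refine tendsto_nhds_unique (hFt ∅ MeasurableSet.empty) ?_
    simp only [VectorMeasure.empty]
    exact tendsto_const_nhds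
  have hFdist : ∀ (n : ℕ) (A : Set Ω), MeasurableSet A → |F A - σseq n A| ≤ 2*(1-α)^n := by
    intro n A hA
    have ht : Tendsto (fun m => |σseq m A - σseq n A|) atTop (nhds |F A - σseq n A|) :=
      ((hFt A hA).sub tendsto_const_nhds).abs
    refine le_of_tendsto ht ?_
    filter_upwards [eventually_ge_atTop n] with m hm
    have h := DT.abs_apply_le_tvNorm (σseq m - σseq n) hA
    rw [VectorMeasure.sub_apply] at h
    exact h.trans (hdist n m hm)
  -- countable additivity of the limit
  have hCA : ∀ (f : ℕ → Set Ω), (∀ i, MeasurableSet (f i)) → Pairwise (Function.onFun Disjoint f) →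
      HasSum (fun i => F (f i)) (F (⋃ i, f i)) := by
    intro f hf hdisj
    have hBmeas : MeasurableSet (⋃ i, f i) := MeasurableSet.iUnion hf
    have hUmeas : ∀ N : ℕ, MeasurableSet (⋃ i < N, f i) := fun N =>
      MeasurableSet.iUnion fun i => MeasurableSet.iUnion fun _ => hf i
    -- finite additivity at each level n
    have hfin : ∀ (n N : ℕ), σseq n (⋃ i < N, f i) = ∑ i ∈ Finset.range N, σseq n (f i) := by
      intro n N
      induction N with
      | zero => simp [VectorMeasure.empty]
      | succ N ih =>
        rw [Set.biUnion_lt_succ, Finset.sum_range_succ, ← ih,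
          VectorMeasure.of_union ?hd (hUmeas N) (hf N)]
        case hd =>
          simp only [Set.disjoint_iUnion_left]
          intro i hi
          exact hdisj (Nat.ne_of_lt hi)
    -- finite additivity of F
    have hFfin : ∀ N : ℕ, F (⋃ i < N, f i) = ∑ i ∈ Finset.range N, F (f i) := by
      intro N
      refine tendsto_nhds_unique (hFt _ (hUmeas N)) ?_
      have : Tendsto (fun n => ∑ i ∈ Finset.range N, σseq n (f i)) atTop
          (nhds (∑ i ∈ Finset.range N, F (f i))) :=
        tendsto_finset_sum _ (fun i _ => hFt (f i) (hf i))
      simpa only [hfin] using this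
    -- partial sums of F converge to F of the union
    have hmain : Tendsto (fun N => ∑ i ∈ Finset.range N, F (f i)) atTop
        (nhds (F (⋃ i, f i))) := by
      rw [Metric.tendsto_atTop]
      intro ε hε
      have hpow : Tendsto (fun n : ℕ => 2*(1-α)^n) atTop (nhds 0) := by
        have := (tendsto_pow_atTop_nhds_zero_of_lt_one h1α.le h1α1).const_mul (2:ℝ)
        simpa using this
      obtain ⟨n, hn⟩ := (hpow.eventually_lt_const (by linarith : (0:ℝ) < ε/3)).exists
      have hsum_n : Tendsto (fun N => ∑ i ∈ Finset.range N, σseq n (f i)) atTop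
          (nhds (σseq n (⋃ i, f i))) := ((σseq n).m_iUnion hf hdisj).tendsto_sum_nat
      obtain ⟨N₀, hN₀⟩ := (Metric.tendsto_atTop.mp hsum_n) (ε/3) (by linarith)
      refine ⟨N₀, fun N hN => ?_⟩
      have e1 : dist (∑ i ∈ Finset.range N, F (f i)) (σseq n (⋃ i < N, f i)) < ε/3 := by
        rw [← hFfin N, Real.dist_eq]
        exact lt_of_le_of_lt (hFdist n _ (hUmeas N)) hn
      have e2 : dist (σseq n (⋃ i < N, f i)) (σseq n (⋃ i, f i)) < ε/3 := by
        rw [hfin n N]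
        exact hN₀ N hN
      have e3 : dist (σseq n (⋃ i, f i)) (F (⋃ i, f i)) < ε/3 := by
        rw [Real.dist_eq, abs_sub_comm]
        exact lt_of_le_of_lt (hFdist n _ hBmeas) hn
      calc dist (∑ i ∈ Finset.range N, F (f i)) (F (⋃ i, f i))
          ≤ dist (∑ i ∈ Finset.range N, F (f i)) (σseq n (⋃ i < N, f i))
            + dist (σseq n (⋃ i < N, f i)) (σseq n (⋃ i, f i))
            + dist (σseq n (⋃ i, f i)) (F (⋃ i, f i)) := dist_triangle4 _ _ _ _
        _ < ε/3 + ε/3 + ε/3 := by linarith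
        _ = ε := by ring
    exact (hasSum_iff_tendsto_nat_of_nonneg (fun i => hFnn (f i) (hf i)) _).mpr hmain
  -- construct the invariant measure
  set μstar : Measure Ω := Measure.ofMeasurable (fun A _ => ENNReal.ofReal (F A))
    (by show ENNReal.ofReal (F ∅) = 0; rw [hFempty]; simp)
    (by
      intro f hf hdisj
      have h := hCA f hf hdisj
      show ENNReal.ofReal (F (⋃ i, f i)) = ∑' i, ENNReal.ofReal (F (f i))
      rw [← h.tsum_eq,
        ENNReal.ofReal_tsum_of_nonneg (fun i => hFnn (f i) (hf i)) h.summable]) with hμstar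
  have hμapp : ∀ A : Set Ω, MeasurableSet A → μstar A = ENNReal.ofReal (F A) := by
    intro A hA
    rw [hμstar, Measure.ofMeasurable_apply A hA]
  have hp : IsProbabilityMeasure μstar := by
    constructor
    rw [hμapp Set.univ MeasurableSet.univ, hFuniv]
    simp
  haveI := hp
  have hts : ∀ A : Set Ω, MeasurableSet A → μstar.toSignedMeasure A = F A := by
    intro A hA
    rw [Measure.toSignedMeasure_apply_measurable hA, measureReal_def, hμapp A hA,
      ENNReal.toReal_ofReal (hFnn A hA)]
  -- μstar is close to σseq n in total variation
  have hsd : ∀ n : ℕ, tvNorm (μstar.toSignedMeasure - σseq n) ≤ 2*(2*(1-α)^n) := by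
    intro n
    apply DT.tvNorm_le_of_bound
    intro A hA
    rw [VectorMeasure.sub_apply, hts A hA]
    exact hFdist n A hA
  -- helper : vanishing tv norm bounds give zero
  have helper : ∀ (σ : SignedMeasure Ω) (C : ℝ), (∀ n : ℕ, tvNorm σ ≤ C * (1-α)^n) → σ = 0 := by
    intro σ C hb
    have h0 : Tendsto (fun n : ℕ => C*(1-α)^n) atTop (nhds 0) := by
      simpa using (tendsto_pow_atTop_nhds_zero_of_lt_one h1α.le h1α1).const_mul C
    have hle : tvNorm σ ≤ 0 := ge_of_tendsto' h0 hb
    exact DT.eq_zero_of_tvNorm_eq_zero (le_antisymm hle (DT.tvNorm_nonneg σ))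
  -- invariance under P = S T
  have hPinv : P μstar.toSignedMeasure = μstar.toSignedMeasure := by
    have key : ∀ n : ℕ, ∀ A : Set Ω, MeasurableSet A →
        |(P μstar.toSignedMeasure - μstar.toSignedMeasure) A| ≤ 8*(1-α)^n := by
      intro n A hA
      have hdecomp : P μstar.toSignedMeasure - μstar.toSignedMeasure
          = P (μstar.toSignedMeasure - σseq n) + (σseq (n+1) - μstar.toSignedMeasure) := by
        rw [map_sub, ← hstep n]
        abel
      have h1 : tvNorm (P (μstar.toSignedMeasure - σseq n)) ≤ 2*(2*(1-α)^n) :=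
        (DT.nonexpansive P hPpos hPmass _).trans (hsd n)
      have h2 : tvNorm (σseq (n+1) - μstar.toSignedMeasure) ≤ 2*(2*(1-α)^(n+1)) := by
        have hneg : σseq (n+1) - μstar.toSignedMeasure
            = -(μstar.toSignedMeasure - σseq (n+1)) := by abel
        rw [hneg, DT.tvNorm_neg]
        exact hsd (n+1)
      have hpowle : (1-α)^(n+1) ≤ (1-α)^n :=
        pow_le_pow_of_le_one h1α.le h1α1.le (Nat.le_succ n)
      have ha1 := DT.abs_apply_le_tvNorm (P (μstar.toSignedMeasure - σseq n)) hA
      have ha2 := DT.abs_apply_le_tvNorm (σseq (n+1) - μstar.toSignedMeasure) hA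
      rw [hdecomp, VectorMeasure.add_apply]
      calc |(P (μstar.toSignedMeasure - σseq n)) A
            + (σseq (n+1) - μstar.toSignedMeasure) A|
          ≤ |(P (μstar.toSignedMeasure - σseq n)) A|
            + |(σseq (n+1) - μstar.toSignedMeasure) A| := abs_add_le _ _
        _ ≤ 8*(1-α)^n := by nlinarith [ha1, ha2, h1, h2]
    have hz : P μstar.toSignedMeasure - μstar.toSignedMeasure = 0 := by
      apply helper _ 16
      intro n
      have := DT.tvNorm_le_of_bound (P μstar.toSignedMeasure - μstar.toSignedMeasure)
        (8*(1-α)^n) (key n)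
      calc tvNorm (P μstar.toSignedMeasure - μstar.toSignedMeasure) ≤ 2*(8*(1-α)^n) := this
        _ = 16 * (1-α)^n := by ring
    have := sub_eq_zero.mp hz
    exact this
  have hprob_eq : probToSigned μstar hp = μstar.toSignedMeasure := rfl
  -- invariance for all times
  have hinv : ∀ t, 0 ≤ t → S t (probToSigned μstar hp) = probToSigned μstar hp := by
    intro t ht
    rw [hprob_eq]
    set ρ : SignedMeasure Ω := S t μstar.toSignedMeasure - μstar.toSignedMeasure with hρ
    have hρuniv : ρ Set.univ = 0 := by
      rw [hρ, VectorMeasure.sub_apply, (hstoch t ht).2]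
      ring
    have hfix : ∀ n : ℕ, (P^n) ρ = ρ := by
      intro n
      induction n with
      | zero => rw [pow_zero]; rfl
      | succ n ih =>
        rw [hpow_apply', ih, hρ, map_sub, hPinv]
        have hcomm : P (S t μstar.toSignedMeasure) = S t μstar.toSignedMeasure := by
          show S T (S t μstar.toSignedMeasure) = S t μstar.toSignedMeasure
          rw [hsg t T ht hT.le, add_comm, ← hsg T t hT.le ht]
          show S t (P μstar.toSignedMeasure) = _
          rw [hPinv]
        rw [hcomm]
    have hz : ρ = 0 := by
      apply helper _ (tvNorm ρ)
      intro n
      have := hiter n ρ hρuniv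
      rw [hfix n] at this
      linarith [this]
    rw [hρ] at hz
    exact sub_eq_zero.mp hz
  -- uniqueness
  have huniq : ∀ (μ' : Measure Ω) (hp' : IsProbabilityMeasure μ'),
      (∀ t, 0 ≤ t → S t (probToSigned μ' hp') = probToSigned μ' hp') → μ' = μstar := by
    intro μ' hp' hinv'
    haveI := hp'
    have hprob_eq' : probToSigned μ' hp' = μ'.toSignedMeasure := rfl
    set δ : SignedMeasure Ω := μ'.toSignedMeasure - μstar.toSignedMeasure with hδdef
    have hδuniv : δ Set.univ = 0 := by
      rw [hδdef, VectorMeasure.sub_apply,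
        Measure.toSignedMeasure_apply_measurable MeasurableSet.univ,
        Measure.toSignedMeasure_apply_measurable MeasurableSet.univ,
        measureReal_def, measureReal_def, measure_univ, measure_univ]
      ring
    have hfix : ∀ n : ℕ, (P^n) δ = δ := by
      intro n
      induction n with
      | zero => rw [pow_zero]; rfl
      | succ n ih =>
        rw [hpow_apply', ih, hδdef, map_sub, hPinv]
        have h' : P μ'.toSignedMeasure = μ'.toSignedMeasure := by
          rw [← hprob_eq']
          exact hinv' T hT.le
        rw [h']
    have hz : δ = 0 := by
      apply helper _ (tvNorm δ)
      intro n
      have := hiter n δ hδuniv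
      rw [hfix n] at this
      linarith [this]
    rw [hδdef] at hz
    have heq := sub_eq_zero.mp hz
    ext A hA
    have := congrArg (fun σ : SignedMeasure Ω => σ A) heq
    simp only [Measure.toSignedMeasure_apply_measurable hA, measureReal_def] at this
    exact (ENNReal.toReal_eq_toReal_iff' (measure_ne_top _ _) (measure_ne_top _ _)).mp this
  -- exponential decay
  refine ⟨μstar, hp, hinv, huniq, ?_⟩
  intro ν hν t ht
  set k : ℕ := ⌊t/T⌋₊ with hk
  have hfl : (k:ℝ) ≤ t/T := Nat.floor_le (div_nonneg ht hT.le)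
  have hkT : (k:ℝ)*T ≤ t := by
    rw [← le_div_iff₀ hT]
    exact hfl
  set r : ℝ := t - (k:ℝ)*T with hr
  have hr0 : 0 ≤ r := by rw [hr]; linarith
  have hSt : S t ν = (P^k) (S r ν) := by
    rw [← hSnT k (S r ν), hsg r ((k:ℝ)*T) hr0 (by positivity) ν]
    congr 1
    rw [hr]; ring
  have hmassr : (S r ν) Set.univ = 0 := by rw [(hstoch r hr0).2]; exact hν
  have step1 : tvNorm (S t ν) ≤ (1-α)^k * tvNorm ν := by
    rw [hSt]
    calc tvNorm ((P^k) (S r ν)) ≤ (1-α)^k * tvNorm (S r ν) := hiter k _ hmassr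
      _ ≤ (1-α)^k * tvNorm ν :=
          mul_le_mul_of_nonneg_left (hnonexp r hr0 ν) (pow_nonneg h1α.le k)
  have hL : Real.log (1-α) < 0 := Real.log_neg h1α h1α1
  have hexp : (1-α)^k ≤ (1 / (1 - α)) * Real.exp (-(-Real.log (1 - α) / T) * t) := by
    have hpw : (1-α)^k = Real.exp ((k:ℝ) * Real.log (1-α)) := by
      rw [← Real.log_pow, Real.exp_log (pow_pos h1α k)]
    have hrhs : (1 / (1 - α)) * Real.exp (-(-Real.log (1 - α) / T) * t)
        = Real.exp ((t/T - 1) * Real.log (1-α)) := by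
      rw [← Real.exp_log (show (0:ℝ) < 1/(1-α) by positivity), ← Real.exp_add]
      congr 1
      rw [Real.log_div one_ne_zero (ne_of_gt h1α), Real.log_one]
      field_simp
      ring
    rw [hpw, hrhs]
    apply Real.exp_le_exp.mpr
    have hlt : t/T - 1 ≤ (k:ℝ) := by
      have := Nat.lt_floor_add_one (t/T)
      rw [← hk] at this
      linarith
    nlinarith [mul_nonneg (sub_nonneg.mpr hlt) (neg_nonneg.mpr hL.le)]
  calc tvNorm (S t ν) ≤ (1-α)^k * tvNorm ν := step1
    _ ≤ (1 / (1 - α)) * Real.exp (-(-Real.log (1 - α) / T) * t) * tvNorm ν :=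
        mul_le_mul_of_nonneg_right hexp (DT.tvNorm_nonneg ν)
end

section
/- Let H(u) := ∫_1^u ds/φ(s) for a continuous increasing φ : [1, ∞) → (0, ∞) with ∫_1^∞ ds/φ(s) = ∞, and let t ↦ ‖ν_t‖ be a nonincreasing function satisfying ∫_0^∞ φ(H^{-1}(s)) ‖ν_s‖ ds ≤ C‖ν_0‖_V. Then H^{-1}(t) ‖ν_t‖ ≤ H^{-1}(0)‖ν_0‖ + C‖ν_0‖_V for all t ≥ 0; in particular ‖ν_t‖ ≲ ‖ν_0‖_V / H^{-1}(t). -/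
open Set MeasureTheory intervalIntegral


/-- The integration-by-parts argument recovering the decay rate `1/H⁻¹(t)` from
the integral estimate `∫_0^∞ φ(H⁻¹(s)) ‖ν_s‖ ds ≤ C ‖ν₀‖_V` for a nonincreasing
function `t ↦ ‖ν_t‖` (end of Section 5.2). -/
theorem subgeometric_rate_from_integral_bound
    (φ : ℝ → ℝ) (hφ_cont : ContinuousOn φ (Set.Ici 1))
    (hφ_mono : StrictMonoOn φ (Set.Ici 1))
    (hφ_pos : ∀ u, 1 ≤ u → 0 < φ u)
    (H : ℝ → ℝ) (hH : ∀ u, H u = ∫ s in (1:ℝ)..u, 1 / φ s)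
    (hH_nonint : Filter.Tendsto H Filter.atTop Filter.atTop)
    (Hinv : ℝ → ℝ)
    (hHinv : ∀ t, 0 ≤ t → 1 ≤ Hinv t ∧ H (Hinv t) = t)
    (N : ℝ → ℝ) (hN_nonneg : ∀ t, 0 ≤ t → 0 ≤ N t)
    (hN_anti : AntitoneOn N (Set.Ici 0))
    (C D : ℝ) (hC : 0 ≤ C) (hD : 0 ≤ D)
    (hint : MeasureTheory.IntegrableOn (fun s => φ (Hinv s) * N s) (Set.Ioi 0))
    (hbound : ∫ s in Set.Ioi (0:ℝ), φ (Hinv s) * N s ≤ C * D) :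
    ∀ t, 0 ≤ t → Hinv t * N t ≤ Hinv 0 * N 0 + C * D := by
  -- modified integrand, continuous and positive on all of ℝ
  set ψ : ℝ → ℝ := fun s => φ (max s 1) with hψ
  have hψ_cont : Continuous ψ :=
    hφ_cont.comp_continuous (continuous_id.max continuous_const)
      (fun x => Set.mem_Ici.2 (le_max_right _ _))
  have hψ_pos : ∀ s, 0 < ψ s := fun s => hφ_pos _ (le_max_right _ _)
  have hinv_cont : Continuous (fun s => 1 / ψ s) :=
    continuous_const.div hψ_cont (fun s => (hψ_pos s).ne')
  set G : ℝ → ℝ := fun u => ∫ s in (1:ℝ)..u, 1 / ψ s with hG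
  have hG_deriv : ∀ u, HasDerivAt G (1 / ψ u) u := by
    intro u
    exact intervalIntegral.integral_hasDerivAt_right
      (hinv_cont.intervalIntegrable _ _)
      (hinv_cont.stronglyMeasurableAtFilter _ _)
      hinv_cont.continuousAt
  have hG_mono : StrictMono G :=
    strictMono_of_hasDerivAt_pos hG_deriv (fun u => div_pos one_pos (hψ_pos u))
  have hGH : ∀ u, 1 ≤ u → G u = H u := by
    intro u hu
    rw [hH]
    apply intervalIntegral.integral_congr
    intro s hs
    rw [Set.uIcc_of_le hu] at hs
    simp only [hψ, max_eq_left hs.1]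
  have hG1 : G 1 = 0 := intervalIntegral.integral_same
  have hHinv1 : ∀ t, 0 ≤ t → 1 ≤ Hinv t := fun t ht => (hHinv t ht).1
  have hGHinv : ∀ t, 0 ≤ t → G (Hinv t) = t := by
    intro t ht
    rw [hGH _ (hHinv1 t ht)]; exact (hHinv t ht).2
  have hHinv0 : Hinv 0 = 1 := by
    have := hGHinv 0 le_rfl
    have h1 : G (Hinv 0) = G 1 := by rw [this, hG1]
    exact hG_mono.injective h1
  have hGnonneg : ∀ u, 1 ≤ u → 0 ≤ G u := by
    intro u hu
    rw [← hG1]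
    exact (hG_mono.le_iff_le).2 hu
  have hsurj : ∀ u, 1 ≤ u → Hinv (G u) = u := by
    intro u hu
    exact hG_mono.injective (hGHinv _ (hGnonneg u hu))
  have hHinv_mono : StrictMonoOn Hinv (Set.Ici 0) := by
    intro a ha b hb hab
    by_contra h
    push_neg at h
    have : G (Hinv b) ≤ G (Hinv a) := hG_mono.le_iff_le.2 h
    rw [hGHinv a ha, hGHinv b hb] at this
    linarith
  have himage : ∀ u, 1 ≤ u → u ∈ Hinv '' (Set.Ici 0) := by
    intro u hu
    exact ⟨G u, hGnonneg u hu, hsurj u hu⟩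
  have hHinv_cont : ContinuousOn Hinv (Set.Ici 0) := by
    intro a ha
    rcases eq_or_lt_of_le (show (0:ℝ) ≤ a from ha) with rfl | hlt
    · have : ContinuousWithinAt Hinv (Set.Ici 0) 0 := by
        apply hHinv_mono.continuousWithinAt_right_of_surjOn self_mem_nhdsWithin
        intro u hu
        rw [hHinv0] at hu
        exact himage u (le_of_lt hu)
      exact this
    · have : ContinuousAt Hinv a := by
      -- image is a neighbourhood of Hinv a since Hinv a > 1
        apply hHinv_mono.continuousAt_of_image_mem_nhds (Ici_mem_nhds hlt)
        have h1 : (1:ℝ) < Hinv a := by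
          rw [← hHinv0]
          exact hHinv_mono (Set.self_mem_Ici) (le_of_lt hlt) hlt
        refine Filter.mem_of_superset (Ioi_mem_nhds h1) ?_
        intro u hu
        exact himage u (le_of_lt hu)
      exact this.continuousWithinAt
  -- the key change-of-variables identity
  have hkey : ∀ t, 0 ≤ t → ∫ s in (0:ℝ)..t, φ (Hinv s) = Hinv t - 1 := by
    intro t ht
    have hb1 : (1:ℝ) ≤ Hinv t := hHinv1 t ht
    have himg : G '' (Set.uIcc 1 (Hinv t)) ⊆ Set.Icc 0 t := by
      rw [Set.uIcc_of_le hb1]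
      rintro x ⟨y, hy, rfl⟩
      constructor
      · exact hGnonneg y hy.1
      · rw [← hGHinv t ht]
        exact hG_mono.le_iff_le.2 hy.2
    have hgc : ContinuousOn (fun s => φ (Hinv s)) (G '' (Set.uIcc 1 (Hinv t))) := by
      apply ContinuousOn.mono _ himg
      apply hφ_cont.comp (hHinv_cont.mono (Set.Icc_subset_Ici_self))
      intro s hs
      exact hHinv1 s hs.1
    have := intervalIntegral.integral_comp_smul_deriv'
      (f := G) (f' := fun u => 1 / ψ u) (g := fun s => φ (Hinv s))
      (a := 1) (b := Hinv t)
      (fun x _ => hG_deriv x) (hinv_cont.continuousOn) hgc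
    rw [hG1, hGHinv t ht] at this
    rw [← this]
    have : ∀ x ∈ Set.uIcc 1 (Hinv t),
        (fun u => 1 / ψ u) x • ((fun s => φ (Hinv s)) ∘ G) x = (1:ℝ) := by
      intro x hx
      rw [Set.uIcc_of_le hb1] at hx
      have hx1 : (1:ℝ) ≤ x := hx.1
      simp only [Function.comp, smul_eq_mul, hsurj x hx1, hψ, max_eq_left hx1]
      rw [one_div, inv_mul_cancel₀ (hφ_pos x hx1).ne']
    rw [intervalIntegral.integral_congr this]
    simp
  -- final chain of inequalities
  intro t ht
  have hφc : ContinuousOn (fun s => φ (Hinv s)) (Set.Icc 0 t) := by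
    apply hφ_cont.comp (hHinv_cont.mono (Set.Icc_subset_Ici_self))
    intro s hs
    exact hHinv1 s hs.1
  have hii1 : IntervalIntegrable (fun s => N t * φ (Hinv s)) MeasureTheory.volume 0 t := by
    apply ContinuousOn.intervalIntegrable
    rw [Set.uIcc_of_le ht]
    exact continuousOn_const.mul hφc
  have hii2 : IntervalIntegrable (fun s => φ (Hinv s) * N s) MeasureTheory.volume 0 t := by
    rw [intervalIntegrable_iff_integrableOn_Ioc_of_le ht]
    exact hint.mono_set Set.Ioc_subset_Ioi_self
  have hmono : ∫ s in (0:ℝ)..t, N t * φ (Hinv s) ≤ ∫ s in (0:ℝ)..t, φ (Hinv s) * N s := by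
    apply intervalIntegral.integral_mono_on ht hii1 hii2
    intro x hx
    have h1 : 0 ≤ φ (Hinv x) := (hφ_pos _ (hHinv1 x hx.1)).le
    have h2 : N t ≤ N x := hN_anti hx.1 ht hx.2
    calc N t * φ (Hinv x) = φ (Hinv x) * N t := by ring
    _ ≤ φ (Hinv x) * N x := mul_le_mul_of_nonneg_left h2 h1
  have h3 : ∫ s in (0:ℝ)..t, φ (Hinv s) * N s ≤ C * D := by
    rw [intervalIntegral.integral_of_le ht]
    refine le_trans (MeasureTheory.setIntegral_mono_set hint ?_ ?_) hbound
    · filter_upwards [MeasureTheory.ae_restrict_mem measurableSet_Ioi] with s hs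
      exact mul_nonneg (hφ_pos _ (hHinv1 s (le_of_lt hs))).le (hN_nonneg s (le_of_lt hs))
    · exact Filter.Eventually.of_forall fun x hx => Set.Ioc_subset_Ioi_self hx
  have h4 : ∫ s in (0:ℝ)..t, N t * φ (Hinv s) = N t * (Hinv t - 1) := by
    rw [intervalIntegral.integral_const_mul, hkey t ht]
  have h6 : N t * (Hinv t - 1) ≤ C * D := by
    rw [← h4]; exact le_trans hmono h3
  have h5 : N t ≤ N 0 := hN_anti Set.self_mem_Ici ht ht
  have h7 : Hinv t * N t = N t * (Hinv t - 1) + N t := by ring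
  rw [hHinv0]
  linarith
end
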